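/- arXiv:2005.11774 — 4 statements merged into one kernel-verified Lean document; each statement's English description precedes it below -/
import Mathlib

section
/- Let c > 0, M ≥ 0, let f : ℝ → ℝ be measurable with 0 ≤ f(λ) ≤ M for all λ ∈ ℝ, and let φ ∈ L²(ℝ, ℂ). Then for all T > 0 and all τ₁, τ₂ ∈ ℝ, the function (λ₁,λ₂) ↦ [e^{i(τ₁−τ₂)λ₂}·|φ(λ₂)|² + e^{i(τ₁λ₁+τ₂λ₂)}·φ(λ₁)·φ(λ₂)]·Φ_T(λ₂−λ₁)·f(λ₁)·f(λ₂) is Lebesgue integrable on ℝ², and |(2π/c²) ∬_{ℝ²} [e^{i(τ₁−τ₂)λ₂}·|φ(λ₂)|² + e^{i(τ₁λ₁+τ₂λ₂)}·φ(λ₁)·φ(λ₂)]·Φ_T(λ₂−λ₁)·f(λ₁)·f(λ₂) dλ₁ dλ₂| ≤ (4π/c²)·M²·‖φ‖_{L²}². In particular the bound is uniform in T > 0 and τ₁, τ₂ ∈ ℝ. -/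
open MeasureTheory Filter Set

noncomputable section

namespace Stmt2Aux

open Real FourierTransform

/-! ### The triangle function and its Fourier transform -/

def tri (t : ℝ) : ℝ := max 0 (1 - |t|)

lemma tri_cont : Continuous tri := by unfold tri; fun_prop

lemma tri_zero : tri 0 = 1 := by simp [tri]

lemma tri_eq_zero {t : ℝ} (ht : 1 ≤ |t|) : tri t = 0 := by
  simp only [tri, max_eq_left_iff]; linarith

lemma tri_neg (t : ℝ) : tri (-t) = tri t := by simp [tri, abs_neg]

lemma tri_hcs : HasCompactSupport tri := by
  apply HasCompactSupport.intro (isCompact_Icc (a := (-1:ℝ)) (b := 1))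
  intro t ht
  simp only [mem_Icc, not_and_or, not_le] at ht
  exact tri_eq_zero
    (by rcases ht with h | h <;> [exact le_abs.2 (Or.inr (by linarith)); exact le_abs.2 (Or.inl h.le)])

lemma tri_integrable : Integrable tri := tri_cont.integrable_of_hasCompactSupport tri_hcs

/-- Reduction of `∫ tri * g` to interval integrals. -/
lemma integral_tri_mul (g : ℝ → ℝ) (hg : Continuous g) :
    ∫ t : ℝ, tri t * g t
      = (∫ t in (-1:ℝ)..0, (1 + t) * g t) + ∫ t in (0:ℝ)..1, (1 - t) * g t := by
  have hsupp : ∀ t ∉ Icc (-1:ℝ) 1, tri t * g t = 0 := by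
    intro t ht
    simp only [mem_Icc, not_and_or, not_le] at ht
    have : tri t = 0 := tri_eq_zero
      (by rcases ht with h | h <;> [exact le_abs.2 (Or.inr (by linarith)); exact le_abs.2 (Or.inl h.le)])
    simp [this]
  rw [← setIntegral_eq_integral_of_forall_compl_eq_zero hsupp,
    integral_Icc_eq_integral_Ioc, ← intervalIntegral.integral_of_le (by norm_num : (-1:ℝ) ≤ 1)]
  have hint : ∀ u v : ℝ, IntervalIntegrable (fun t => tri t * g t) volume u v :=
    fun u v => ((tri_cont.mul hg).intervalIntegrable u v)
  rw [← intervalIntegral.integral_add_adjacent_intervals (hint (-1) 0) (hint 0 1)]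
  congr 1
  · apply intervalIntegral.integral_congr
    intro t ht
    rw [uIcc_of_le (by norm_num : (-1:ℝ) ≤ 0), mem_Icc] at ht
    have : |t| = -t := abs_of_nonpos ht.2
    simp only [tri, this]
    rw [max_eq_right (by linarith)]
    ring_nf
  · apply intervalIntegral.integral_congr
    intro t ht
    rw [uIcc_of_le (by norm_num : (0:ℝ) ≤ 1), mem_Icc] at ht
    have : |t| = t := abs_of_nonneg ht.1
    simp only [tri, this]
    rw [max_eq_right (by linarith)]

lemma integral_tri : ∫ t : ℝ, tri t = 1 := by
  have := integral_tri_mul (fun _ => 1) continuous_const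
  simp only [mul_one] at this
  rw [this]
  have h1 : IntervalIntegrable (fun _ : ℝ => (1:ℝ)) volume (-1) 0 := intervalIntegrable_const
  have h2 : IntervalIntegrable (fun t : ℝ => t) volume (-1) 0 :=
    intervalIntegral.intervalIntegrable_id
  have h3 : IntervalIntegrable (fun _ : ℝ => (1:ℝ)) volume 0 1 := intervalIntegrable_const
  have h4 : IntervalIntegrable (fun t : ℝ => t) volume 0 1 :=
    intervalIntegral.intervalIntegrable_id
  rw [intervalIntegral.integral_add h1 h2, intervalIntegral.integral_sub h3 h4]
  norm_num [integral_id]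

lemma integral_right {a : ℝ} (ha : a ≠ 0) :
    ∫ t in (0:ℝ)..1, (1 - t) * Real.cos (a * t) = (1 - Real.cos a) / a ^ 2 := by
  have h : ∀ t : ℝ, HasDerivAt
      (fun t => Real.sin (a*t)/a - (t * Real.sin (a*t)/a + Real.cos (a*t)/a^2))
      ((1 - t) * Real.cos (a*t)) t := by
    intro t
    have hat : HasDerivAt (fun t : ℝ => a * t) a t := by
      simpa using (hasDerivAt_id t).const_mul a
    have hsin : HasDerivAt (fun t => Real.sin (a*t)) (Real.cos (a*t) * a) t :=
      (Real.hasDerivAt_sin (a*t)).comp t hat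
    have hcos : HasDerivAt (fun t => Real.cos (a*t)) (-Real.sin (a*t) * a) t :=
      (Real.hasDerivAt_cos (a*t)).comp t hat
    have h2 : HasDerivAt (fun t : ℝ => t * Real.sin (a*t))
        (1 * Real.sin (a*t) + t * (Real.cos (a*t) * a)) t := (hasDerivAt_id t).mul hsin
    have H := (hsin.div_const a).sub ((h2.div_const a).add (hcos.div_const (a^2)))
    refine H.congr_deriv ?_
    field_simp
    ring
  rw [intervalIntegral.integral_eq_sub_of_hasDerivAt (fun t _ => h t)
    (Continuous.intervalIntegrable (by fun_prop) _ _)]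
  simp only [mul_one, mul_zero, Real.sin_zero, Real.cos_zero, one_mul, zero_mul, zero_div]
  field_simp
  ring

lemma integral_left {a : ℝ} (ha : a ≠ 0) :
    ∫ t in (-1:ℝ)..0, (1 + t) * Real.cos (a * t) = (1 - Real.cos a) / a ^ 2 := by
  have h : ∀ t : ℝ, HasDerivAt
      (fun t => Real.sin (a*t)/a + (t * Real.sin (a*t)/a + Real.cos (a*t)/a^2))
      ((1 + t) * Real.cos (a*t)) t := by
    intro t
    have hat : HasDerivAt (fun t : ℝ => a * t) a t := by
      simpa using (hasDerivAt_id t).const_mul a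
    have hsin : HasDerivAt (fun t => Real.sin (a*t)) (Real.cos (a*t) * a) t :=
      (Real.hasDerivAt_sin (a*t)).comp t hat
    have hcos : HasDerivAt (fun t => Real.cos (a*t)) (-Real.sin (a*t) * a) t :=
      (Real.hasDerivAt_cos (a*t)).comp t hat
    have h2 : HasDerivAt (fun t : ℝ => t * Real.sin (a*t))
        (1 * Real.sin (a*t) + t * (Real.cos (a*t) * a)) t := (hasDerivAt_id t).mul hsin
    have H := (hsin.div_const a).add ((h2.div_const a).add (hcos.div_const (a^2)))
    refine H.congr_deriv ?_
    field_simp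
    ring
  rw [intervalIntegral.integral_eq_sub_of_hasDerivAt (fun t _ => h t)
    (Continuous.intervalIntegrable (by fun_prop) _ _)]
  simp only [mul_one, mul_zero, Real.sin_zero, Real.cos_zero, one_mul, zero_mul, zero_div,
    mul_neg, Real.sin_neg, Real.cos_neg, neg_mul, neg_neg]
  field_simp
  ring

/-! ### The squared sinc function -/

def sinc2 (x : ℝ) : ℝ := if x = 0 then 1 else (Real.sin x / x) ^ 2

lemma sinc2_meas : Measurable sinc2 := by
  unfold sinc2
  exact Measurable.ite (measurableSet_singleton (0:ℝ)) measurable_const (by fun_prop)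

lemma sinc2_nonneg (x : ℝ) : 0 ≤ sinc2 x := by
  unfold sinc2; split <;> positivity

lemma sinc2_le (x : ℝ) : sinc2 x ≤ 2 * (1 + x ^ 2)⁻¹ := by
  have hx2 : (0:ℝ) < 1 + x ^ 2 := by positivity
  unfold sinc2
  split
  · subst ‹x = 0›; norm_num
  · have hx : x ≠ 0 := ‹x ≠ 0›
    have hs : Real.sin x ^ 2 ≤ x ^ 2 := Real.sin_sq_le_sq
    have hs1 : Real.sin x ^ 2 ≤ 1 := by
      nlinarith [Real.abs_sin_le_one x, abs_nonneg (Real.sin x), sq_abs (Real.sin x)]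
    have hxx : (0:ℝ) < x ^ 2 := by positivity
    have h2 : 2 * (1 + x ^ 2)⁻¹ = 2 / (1 + x ^ 2) := by ring
    rw [div_pow, h2, div_le_div_iff₀ hxx hx2]
    nlinarith

lemma integrable_sinc2 : Integrable sinc2 := by
  refine Integrable.mono' (integrable_inv_one_add_sq.const_mul 2) sinc2_meas.aestronglyMeasurable ?_
  filter_upwards with x
  rw [Real.norm_eq_abs, abs_of_nonneg (sinc2_nonneg x)]
  exact sinc2_le x

lemma integral_cofReal {f : ℝ → ℝ} : ∫ x : ℝ, ((f x : ℝ) : ℂ) = ((∫ x : ℝ, f x : ℝ) : ℂ) :=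
  integral_ofReal

lemma integral_tri_cos (ξ : ℝ) :
    ∫ t : ℝ, tri t * Real.cos (2*π*ξ*t) = sinc2 (π * ξ) := by
  by_cases hξ : ξ = 0
  · subst hξ
    simp only [mul_zero, zero_mul, Real.cos_zero, mul_one]
    rw [integral_tri, sinc2]
    simp
  · have ha : 2*π*ξ ≠ 0 := mul_ne_zero (mul_ne_zero two_ne_zero Real.pi_ne_zero) hξ
    rw [integral_tri_mul _ (by fun_prop), integral_left ha, integral_right ha]
    have hy : π * ξ ≠ 0 := mul_ne_zero Real.pi_ne_zero hξ
    rw [sinc2, if_neg hy, show 2*π*ξ = 2*(π*ξ) by ring, Real.cos_two_mul]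
    have pyth := Real.sin_sq_add_cos_sq (π*ξ)
    field_simp
    nlinarith [pyth, sq_nonneg (π*ξ)]

lemma key (ξ : ℝ) :
    𝓕 (fun t => ((tri t : ℝ) : ℂ)) ξ = ((sinc2 (π * ξ) : ℝ) : ℂ) := by
  rw [Real.fourier_real_eq_integral_exp_smul]
  have hsm : ∀ t : ℝ, Complex.exp (↑(-2 * π * t * ξ) * Complex.I) • ((tri t : ℝ) : ℂ)
      = ((tri t * Real.cos (2*π*ξ*t) : ℝ) : ℂ)
        + ((-(tri t * Real.sin (2*π*ξ*t)) : ℝ) : ℂ) * Complex.I := by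
    intro t
    rw [smul_eq_mul, Complex.exp_mul_I]
    rw [show ((-2 * π * t * ξ : ℝ) : ℂ) = ((-(2*π*ξ*t) : ℝ) : ℂ) by push_cast; ring]
    rw [← Complex.ofReal_cos, ← Complex.ofReal_sin, Real.cos_neg, Real.sin_neg]
    push_cast
    ring
  simp_rw [hsm]
  have hcs1 : HasCompactSupport (fun t : ℝ => tri t * Real.cos (2*π*ξ*t)) :=
    tri_hcs.mul_right
  have hcs2 : HasCompactSupport (fun t : ℝ => tri t * Real.sin (2*π*ξ*t)) :=
    tri_hcs.mul_right
  have hPr : Integrable (fun t : ℝ => tri t * Real.cos (2*π*ξ*t)) :=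
    (tri_cont.mul (by fun_prop)).integrable_of_hasCompactSupport hcs1
  have hQr : Integrable (fun t : ℝ => -(tri t * Real.sin (2*π*ξ*t))) :=
    ((tri_cont.mul (by fun_prop)).integrable_of_hasCompactSupport hcs2).neg
  have hPc : Integrable (fun t : ℝ => ((tri t * Real.cos (2*π*ξ*t) : ℝ) : ℂ)) volume :=
    hPr.ofReal
  have hQc : Integrable (fun t : ℝ => ((-(tri t * Real.sin (2*π*ξ*t)) : ℝ) : ℂ)) volume :=
    hQr.ofReal
  rw [integral_add hPc (hQc.mul_const Complex.I), integral_mul_const,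
    integral_cofReal, integral_cofReal]
  have hodd : (∫ t : ℝ, tri t * Real.sin (2*π*ξ*t)) = 0 := by
    have h1 := integral_neg_eq_self (fun t : ℝ => tri t * Real.sin (2*π*ξ*t)) volume
    simp only [tri_neg, mul_neg, Real.sin_neg] at h1
    rw [integral_neg] at h1
    linarith
  rw [integral_neg, hodd, integral_tri_cos]
  simp

lemma integral_sinc2_scaled : ∫ ξ : ℝ, sinc2 (π * ξ) = 1 := by
  have hcont : Continuous (fun t : ℝ => ((tri t : ℝ) : ℂ)) :=
    Complex.continuous_ofReal.comp tri_cont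
  have hint : Integrable (fun t : ℝ => ((tri t : ℝ) : ℂ)) := tri_integrable.ofReal
  have hFTeq : 𝓕 (fun t : ℝ => ((tri t : ℝ) : ℂ)) = fun ξ => ((sinc2 (π * ξ) : ℝ) : ℂ) :=
    funext key
  have hFT : Integrable (𝓕 (fun t : ℝ => ((tri t : ℝ) : ℂ))) := by
    rw [hFTeq]
    exact (integrable_sinc2.comp_mul_left' Real.pi_ne_zero).ofReal
  have hinv := hcont.fourierInv_fourier_eq hint hFT
  have h0 := congrFun hinv 0
  rw [Real.fourierInv_eq_fourier_neg, neg_zero,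
    Real.fourier_real_eq_integral_exp_smul] at h0
  simp only [mul_zero, Complex.ofReal_zero, zero_mul, Complex.exp_zero, one_smul] at h0
  rw [hFTeq] at h0
  beta_reduce at h0
  rw [integral_cofReal] at h0
  rw [tri_zero] at h0
  exact_mod_cast h0

lemma integral_sinc2 : ∫ x : ℝ, sinc2 x = π := by
  have h := integral_sinc2_scaled
  rw [MeasureTheory.Measure.integral_comp_mul_left sinc2 π] at h
  rw [abs_of_nonneg (inv_nonneg.2 Real.pi_pos.le), smul_eq_mul] at h
  have := Real.pi_ne_zero
  field_simp at h
  linarith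

end Stmt2Aux

/-- The Fejér kernel on `ℝ`:
`Φ_T(λ) = (1/(2πT))·(sin(Tλ/2)/(λ/2))²` for `λ ≠ 0`, with `Φ_T(0) = T/(2π)`. -/
def fejer (T l : ℝ) : ℝ :=
  if l = 0 then T / (2 * Real.pi)
  else (1 / (2 * Real.pi * T)) * (Real.sin (T * l / 2) / (l / 2)) ^ 2

namespace Stmt2Aux

open Real

lemma fejer_eq {T : ℝ} (hT : 0 < T) (l : ℝ) :
    fejer T l = (T / (2 * π)) * sinc2 ((T / 2) * l) := by
  unfold fejer sinc2
  rcases eq_or_ne l 0 with h | h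
  · simp [h]
  · have hTl : (T / 2) * l ≠ 0 := mul_ne_zero (by positivity) h
    rw [if_neg h, if_neg hTl]
    have hπ := Real.pi_ne_zero
    have hT' : T ≠ 0 := hT.ne'
    rw [show T * l / 2 = (T / 2) * l by ring]
    field_simp

lemma fejer_nonneg {T : ℝ} (hT : 0 < T) (l : ℝ) : 0 ≤ fejer T l := by
  unfold fejer
  split
  · positivity
  · positivity

lemma fejer_meas (T : ℝ) : Measurable (fejer T) := by
  unfold fejer
  exact Measurable.ite (measurableSet_singleton (0:ℝ)) measurable_const (by fun_prop)

lemma fejer_integrable {T : ℝ} (hT : 0 < T) : Integrable (fejer T) := by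
  rw [show fejer T = fun l => (T / (2 * π)) * sinc2 ((T / 2) * l) from funext (fejer_eq hT)]
  exact (integrable_sinc2.comp_mul_left' (show T / 2 ≠ 0 by positivity)).const_mul _

lemma fejer_integral {T : ℝ} (hT : 0 < T) : ∫ l : ℝ, fejer T l = 1 := by
  rw [show fejer T = fun l => (T / (2 * π)) * sinc2 ((T / 2) * l) from funext (fejer_eq hT)]
  rw [integral_const_mul, MeasureTheory.Measure.integral_comp_mul_left sinc2 (T / 2),
    integral_sinc2, smul_eq_mul, abs_of_nonneg (inv_nonneg.2 (by positivity : (0:ℝ) ≤ T / 2))]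
  have hπ := Real.pi_ne_zero
  have hT' : T ≠ 0 := hT.ne'
  field_simp

/-! ### Measure-preserving shears -/

def eEquiv : (ℝ × ℝ) ≃ (ℝ × ℝ) where
  toFun p := (p.2 - p.1, p.2)
  invFun q := (q.2 - q.1, q.2)
  left_inv p := by simp [Prod.ext_iff]
  right_inv q := by simp [Prod.ext_iff]

def eHomeo : (ℝ × ℝ) ≃ₜ (ℝ × ℝ) :=
  { eEquiv with
    continuous_toFun := by dsimp [eEquiv]; fun_prop
    continuous_invFun := by dsimp [eEquiv]; fun_prop }

def e'Equiv : (ℝ × ℝ) ≃ (ℝ × ℝ) where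
  toFun p := (p.2 - p.1, p.1)
  invFun q := (q.2, q.1 + q.2)
  left_inv p := by simp [Prod.ext_iff]
  right_inv q := by simp [Prod.ext_iff]

def e'Homeo : (ℝ × ℝ) ≃ₜ (ℝ × ℝ) :=
  { e'Equiv with
    continuous_toFun := by dsimp [e'Equiv]; fun_prop
    continuous_invFun := by dsimp [e'Equiv]; fun_prop }

lemma mpE : MeasurePreserving (fun p : ℝ × ℝ => (p.2 - p.1, p.2))
    (volume.prod volume) (volume.prod volume) := by
  have h1 := measurePreserving_prod_sub (volume : Measure ℝ) volume
  have h2 := measurePreserving_add_prod (μ := (volume : Measure ℝ)) (ν := volume)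
  have h3 := Measure.measurePreserving_swap (μ := (volume : Measure ℝ)) (ν := (volume : Measure ℝ))
  have H := h3.comp (h2.comp h1)
  convert H using 1
  funext p
  simp only [Function.comp_apply, Prod.swap_prod_mk, Prod.mk.injEq]
  exact ⟨trivial, by ring⟩

lemma mpE' : MeasurePreserving (fun p : ℝ × ℝ => (p.2 - p.1, p.1))
    (volume.prod volume) (volume.prod volume) := by
  have h1 := measurePreserving_prod_sub (volume : Measure ℝ) volume
  have h3 := Measure.measurePreserving_swap (μ := (volume : Measure ℝ)) (ν := (volume : Measure ℝ))
  have H := h3.comp h1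
  convert H using 1
  funext p
  rfl

end Stmt2Aux

open Stmt2Aux in
/-- Let `c > 0`, `M ≥ 0`, `f : ℝ → ℝ` measurable with `0 ≤ f ≤ M`, and
`φ ∈ L²(ℝ, ℂ)`.  Then for all `T > 0` and `τ₁, τ₂ ∈ ℝ`, the function
`(λ₁,λ₂) ↦ [e^{i(τ₁−τ₂)λ₂}·|φ(λ₂)|² + e^{i(τ₁λ₁+τ₂λ₂)}·φ(λ₁)·φ(λ₂)]·Φ_T(λ₂−λ₁)·f(λ₁)·f(λ₂)`
is Lebesgue integrable on `ℝ²` and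
`|(2π/c²) ∬ ... dλ₁ dλ₂| ≤ (4π/c²)·M²·‖φ‖_{L²}²`, uniformly in `T, τ₁, τ₂`. -/
theorem stmt2 (c M : ℝ) (hc : 0 < c) (hM : 0 ≤ M)
    (f : ℝ → ℝ) (hf : Measurable f) (hf0 : ∀ l : ℝ, 0 ≤ f l) (hfM : ∀ l : ℝ, f l ≤ M)
    (φ : ℝ → ℂ) (hφ : MemLp φ 2) (T : ℝ) (hT : 0 < T) (τ₁ τ₂ : ℝ) :
    Integrable (fun p : ℝ × ℝ =>
      (Complex.exp (Complex.I * (((τ₁ - τ₂) * p.2 : ℝ) : ℂ)) * ((‖φ p.2‖ ^ 2 : ℝ) : ℂ)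
        + Complex.exp (Complex.I * ((τ₁ * p.1 + τ₂ * p.2 : ℝ) : ℂ)) * φ p.1 * φ p.2)
      * ((fejer T (p.2 - p.1) * f p.1 * f p.2 : ℝ) : ℂ)) ∧
    ‖((2 * Real.pi / c ^ 2 : ℝ) : ℂ) *
      ∫ p : ℝ × ℝ,
        (Complex.exp (Complex.I * (((τ₁ - τ₂) * p.2 : ℝ) : ℂ)) * ((‖φ p.2‖ ^ 2 : ℝ) : ℂ)
          + Complex.exp (Complex.I * ((τ₁ * p.1 + τ₂ * p.2 : ℝ) : ℂ)) * φ p.1 * φ p.2)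
        * ((fejer T (p.2 - p.1) * f p.1 * f p.2 : ℝ) : ℂ)‖
      ≤ (4 * Real.pi / c ^ 2) * M ^ 2 * ∫ l : ℝ, ‖φ l‖ ^ 2 := by
  have hπ := Real.pi_pos
  set F : ℝ × ℝ → ℂ := fun p =>
      (Complex.exp (Complex.I * (((τ₁ - τ₂) * p.2 : ℝ) : ℂ)) * ((‖φ p.2‖ ^ 2 : ℝ) : ℂ)
        + Complex.exp (Complex.I * ((τ₁ * p.1 + τ₂ * p.2 : ℝ) : ℂ)) * φ p.1 * φ p.2)
      * ((fejer T (p.2 - p.1) * f p.1 * f p.2 : ℝ) : ℂ) with hF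
  set k : ℝ → ℝ := fejer T with hk
  have hk0 : ∀ x, 0 ≤ k x := fejer_nonneg hT
  have hki : Integrable k := fejer_integrable hT
  have hkI : ∫ x, k x = 1 := fejer_integral hT
  -- measurable representative of φ
  set ψ : ℝ → ℂ := hφ.aestronglyMeasurable.mk φ with hψ
  have hψm : StronglyMeasurable ψ := hφ.aestronglyMeasurable.stronglyMeasurable_mk
  have hae : φ =ᵐ[volume] ψ := hφ.aestronglyMeasurable.ae_eq_mk
  have hψ2 : MemLp ψ 2 := hφ.ae_eq hae
  set u : ℝ → ℝ := fun l => ‖ψ l‖ ^ 2 with hu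
  have hui : Integrable u := (memLp_two_iff_integrable_sq_norm hψm.aestronglyMeasurable).mp hψ2
  have huint : ∫ l : ℝ, ‖φ l‖ ^ 2 = ∫ l, u l := by
    refine integral_congr_ae (hae.mono fun x hx => ?_)
    rw [hu]
    simp only [hx]
  -- the integrable products on ℝ²
  have hG2 : Integrable (fun q : ℝ × ℝ => k q.1 * u q.2) (volume.prod volume) :=
    hki.mul_prod hui
  have hGm : AEStronglyMeasurable (fun q : ℝ × ℝ => k q.1 * u q.2) (volume.prod volume) :=
    hG2.aestronglyMeasurable
  have hI2 : Integrable (fun p : ℝ × ℝ => k (p.2 - p.1) * u p.2) (volume.prod volume) :=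
    (mpE.integrable_comp_emb eHomeo.measurableEmbedding).mpr hG2
  have hI1 : Integrable (fun p : ℝ × ℝ => k (p.2 - p.1) * u p.1) (volume.prod volume) :=
    (mpE'.integrable_comp_emb e'Homeo.measurableEmbedding).mpr hG2
  have hval2 : ∫ p : ℝ × ℝ, k (p.2 - p.1) * u p.2 ∂(volume.prod volume) = ∫ l, u l := by
    have := mpE.integral_comp eHomeo.measurableEmbedding (fun q : ℝ × ℝ => k q.1 * u q.2)
    rw [this, integral_prod_mul, hkI, one_mul]
  have hval1 : ∫ p : ℝ × ℝ, k (p.2 - p.1) * u p.1 ∂(volume.prod volume) = ∫ l, u l := by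
    have := mpE'.integral_comp e'Homeo.measurableEmbedding (fun q : ℝ × ℝ => k q.1 * u q.2)
    rw [this, integral_prod_mul, hkI, one_mul]
  -- dominating function
  set Bd : ℝ × ℝ → ℝ := fun p =>
    M ^ 2 * ((3/2) * (k (p.2 - p.1) * u p.2) + (1/2) * (k (p.2 - p.1) * u p.1)) with hBd
  have hBdi : Integrable Bd (volume.prod volume) :=
    (((hI2.const_mul (3/2)).add (hI1.const_mul (1/2))).const_mul (M ^ 2))
  have hBdval : ∫ p, Bd p ∂(volume.prod volume) = 2 * M ^ 2 * ∫ l, u l := by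
    rw [hBd]
    rw [integral_const_mul, integral_add (hI2.const_mul (3/2)) (hI1.const_mul (1/2)),
      integral_const_mul, integral_const_mul, hval2, hval1]
    ring
  -- measurability of F
  have hFm : AEStronglyMeasurable F (volume.prod volume) := by
    have hφ1 : AEStronglyMeasurable (fun p : ℝ × ℝ => φ p.1) (volume.prod volume) :=
      hφ.aestronglyMeasurable.comp_fst
    have hφ2 : AEStronglyMeasurable (fun p : ℝ × ℝ => φ p.2) (volume.prod volume) :=
      hφ.aestronglyMeasurable.comp_snd
    have habs : AEStronglyMeasurable
        (fun p : ℝ × ℝ => ((‖φ p.2‖ ^ 2 : ℝ) : ℂ)) (volume.prod volume) :=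
      (Complex.continuous_ofReal.comp
        ((continuous_pow 2).comp continuous_norm)).comp_aestronglyMeasurable hφ2
    have hexp1 : AEStronglyMeasurable
        (fun p : ℝ × ℝ => Complex.exp (Complex.I * (((τ₁ - τ₂) * p.2 : ℝ) : ℂ)))
        (volume.prod volume) := (Continuous.aestronglyMeasurable (by fun_prop))
    have hexp2 : AEStronglyMeasurable
        (fun p : ℝ × ℝ => Complex.exp (Complex.I * ((τ₁ * p.1 + τ₂ * p.2 : ℝ) : ℂ)))
        (volume.prod volume) := (Continuous.aestronglyMeasurable (by fun_prop))
    have hreal : Measurable (fun p : ℝ × ℝ => fejer T (p.2 - p.1) * f p.1 * f p.2) :=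
      (((fejer_meas T).comp (measurable_snd.sub measurable_fst)).mul
        (hf.comp measurable_fst)).mul (hf.comp measurable_snd)
    exact ((hexp1.mul habs).add ((hexp2.mul hφ1).mul hφ2)).mul
      ((Complex.measurable_ofReal.comp hreal).aestronglyMeasurable)
  -- pointwise bound
  have hbd : ∀ᵐ p ∂(volume.prod volume), ‖F p‖ ≤ Bd p := by
    have h1 : (fun p : ℝ × ℝ => φ p.1) =ᵐ[volume.prod volume] (fun p => ψ p.1) :=
      (Measure.quasiMeasurePreserving_fst (μ := (volume : Measure ℝ))
        (ν := (volume : Measure ℝ))).ae_eq hae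
    have h2 : (fun p : ℝ × ℝ => φ p.2) =ᵐ[volume.prod volume] (fun p => ψ p.2) :=
      (Measure.quasiMeasurePreserving_snd (μ := (volume : Measure ℝ))
        (ν := (volume : Measure ℝ))).ae_eq hae
    filter_upwards [h1, h2] with p hp1 hp2
    have habs1 : ‖Complex.exp (Complex.I * (((τ₁ - τ₂) * p.2 : ℝ) : ℂ))‖ = 1 := by
      rw [Complex.norm_exp]
      simp
    have habs2 : ‖Complex.exp (Complex.I * ((τ₁ * p.1 + τ₂ * p.2 : ℝ) : ℂ))‖ = 1 := by
      rw [Complex.norm_exp]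
      simp
    have hreal0 : 0 ≤ k (p.2 - p.1) * f p.1 * f p.2 :=
      mul_nonneg (mul_nonneg (hk0 _) (hf0 p.1)) (hf0 p.2)
    have hrealM : k (p.2 - p.1) * f p.1 * f p.2 ≤ M ^ 2 * k (p.2 - p.1) := by
      have h := hk0 (p.2 - p.1)
      have h12 : f p.1 * f p.2 ≤ M * M := mul_le_mul (hfM p.1) (hfM p.2) (hf0 p.2) hM
      calc k (p.2 - p.1) * f p.1 * f p.2 = k (p.2 - p.1) * (f p.1 * f p.2) := by ring
        _ ≤ k (p.2 - p.1) * (M * M) := mul_le_mul_of_nonneg_left h12 h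
        _ = M ^ 2 * k (p.2 - p.1) := by ring
    have hsum : ‖Complex.exp (Complex.I * (((τ₁ - τ₂) * p.2 : ℝ) : ℂ))
          * ((‖φ p.2‖ ^ 2 : ℝ) : ℂ)
        + Complex.exp (Complex.I * ((τ₁ * p.1 + τ₂ * p.2 : ℝ) : ℂ)) * φ p.1 * φ p.2‖
        ≤ ‖ψ p.2‖ ^ 2 + ‖ψ p.1‖ * ‖ψ p.2‖ := by
      refine (norm_add_le _ _).trans ?_
      rw [norm_mul, norm_mul, norm_mul]
      simp only [habs1, habs2, one_mul, Complex.norm_real, Real.norm_eq_abs]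
      rw [abs_of_nonneg (by positivity : (0:ℝ) ≤ ‖φ p.2‖ ^ 2)]
      rw [hp1, hp2]
    have step : ‖F p‖ ≤ (‖ψ p.2‖ ^ 2 + ‖ψ p.1‖ * ‖ψ p.2‖) * (M ^ 2 * k (p.2 - p.1)) := by
      rw [hF]
      dsimp only
      rw [norm_mul]
      refine mul_le_mul hsum ?_ (norm_nonneg _) (by positivity)
      rw [Complex.norm_real, Real.norm_eq_abs, abs_of_nonneg hreal0]
      exact hrealM
    refine step.trans ?_
    rw [hBd]
    have hu1 : u p.1 = ‖ψ p.1‖ ^ 2 := rfl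
    have hu2 : u p.2 = ‖ψ p.2‖ ^ 2 := rfl
    nlinarith [mul_nonneg (mul_nonneg (sq_nonneg M) (hk0 (p.2 - p.1)))
      (sq_nonneg (‖ψ p.1‖ - ‖ψ p.2‖)), hu1, hu2]
  have hFi : Integrable F (volume.prod volume) := Integrable.mono' hBdi hFm hbd
  constructor
  · rw [Measure.volume_eq_prod]
    exact hFi
  · have hvol : (volume : Measure (ℝ × ℝ)) = volume.prod volume := Measure.volume_eq_prod ℝ ℝ
    rw [norm_mul, Complex.norm_real, Real.norm_eq_abs, abs_of_nonneg (by positivity : (0:ℝ) ≤ 2 * Real.pi / c ^ 2)]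
    have hint1 : ‖∫ p : ℝ × ℝ, F p‖ ≤ ∫ p, Bd p ∂(volume.prod volume) := by
      rw [hvol]
      exact (norm_integral_le_integral_norm _).trans
        (integral_mono_ae hFi.norm hBdi hbd)
    have hc2 : (0:ℝ) < c ^ 2 := by positivity
    calc 2 * Real.pi / c ^ 2 * ‖∫ p : ℝ × ℝ, F p‖
        ≤ 2 * Real.pi / c ^ 2 * (2 * M ^ 2 * ∫ l, u l) := by
          refine mul_le_mul_of_nonneg_left ?_ (by positivity)
          rw [← hBdval]; exact hint1
      _ = 4 * Real.pi / c ^ 2 * M ^ 2 * ∫ l : ℝ, ‖φ l‖ ^ 2 := by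
          rw [huint]; ring
end
end

section
/- Let (f_Δ)_{Δ>0} be an approximate white-noise family with constants c > 0 and M > 0, and let φ ∈ L²(ℝ, ℂ). Then for all τ₁, τ₂ ∈ ℝ and all sequences T_n → ∞, Δ_n → ∞, the absolutely convergent double integrals satisfy (2π/c²) ∬_{ℝ²} e^{i(τ₁−τ₂)λ₂}·|φ(λ₂)|²·Φ_{T_n}(λ₂−λ₁)·f_{Δ_n}(λ₁)·f_{Δ_n}(λ₂) dλ₁ dλ₂ → (1/(2π)) ∫_ℝ e^{i(τ₁−τ₂)λ}·|φ(λ)|² dλ as n → ∞. -/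
open MeasureTheory Filter Set

noncomputable section

/-- A family `(f_Δ)_{Δ>0}` of measurable functions `f_Δ : ℝ → ℝ` is an *approximate
white-noise family* with constants `c > 0` and `M > 0` if `0 ≤ f_Δ ≤ M`, each `f_Δ` is even
and Lebesgue integrable, and for every `a > 0`,
`sup_{|λ|≤a} |f_Δ(λ) − c/(2π)| → 0` as `Δ → ∞` (conditions (2.1a)–(2.1д)). -/
def ApproxWhiteNoise (f : ℝ → ℝ → ℝ) (c M : ℝ) : Prop :=
  0 < c ∧ 0 < M ∧
  (∀ Δ : ℝ, 0 < Δ → Measurable (f Δ)) ∧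
  (∀ Δ : ℝ, 0 < Δ → ∀ l : ℝ, 0 ≤ f Δ l ∧ f Δ l ≤ M) ∧
  (∀ Δ : ℝ, 0 < Δ → ∀ l : ℝ, f Δ (-l) = f Δ l) ∧
  (∀ Δ : ℝ, 0 < Δ → Integrable (f Δ)) ∧
  (∀ a : ℝ, 0 < a → ∀ ε : ℝ, 0 < ε → ∃ Δ₀ : ℝ, ∀ Δ : ℝ, Δ₀ ≤ Δ →
    ∀ l : ℝ, |l| ≤ a → |f Δ l - c / (2 * Real.pi)| ≤ ε)

def Ssq (x : ℝ) : ℝ := (Real.sin x / x) ^ 2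

def qbd (x : ℝ) : ℝ := if |x| ≤ 1 then 1 else (x ^ 2)⁻¹

lemma qbd_nonneg (x : ℝ) : 0 ≤ qbd x := by unfold qbd; split <;> positivity

lemma abs_sin_le_abs (x : ℝ) : |Real.sin x| ≤ |x| := by
  have key : ∀ y : ℝ, 0 ≤ y → |Real.sin y| ≤ y := by
    intro y hy
    have hup : Real.sin y ≤ y := Real.sin_le hy
    have hlo : -y ≤ Real.sin y := by
      rcases le_or_gt y Real.pi with h | h
      · have := Real.sin_nonneg_of_nonneg_of_le_pi hy h
        linarith
      · have h1 : (1:ℝ) ≤ y := by nlinarith [Real.pi_gt_three]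
        have := Real.neg_one_le_sin y
        linarith
    exact abs_le.2 ⟨hlo, hup⟩
  rcases le_or_gt 0 x with h | h
  · rw [abs_of_nonneg h]; exact key x h
  · rw [abs_of_neg h]
    have := key (-x) (by linarith)
    simpa [Real.sin_neg, abs_neg] using this

lemma Ssq_le_qbd (x : ℝ) : Ssq x ≤ qbd x := by
  unfold Ssq qbd
  rcases eq_or_ne x 0 with rfl | hx
  · simp
  split
  · rw [div_pow, div_le_one (by positivity)]
    have := abs_sin_le_abs x
    nlinarith [sq_abs x, sq_abs (Real.sin x), abs_nonneg x, abs_nonneg (Real.sin x)]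
  · rw [div_pow, div_le_iff₀ (by positivity), inv_mul_cancel₀ (by positivity)]
    exact Real.sin_sq_le_one x

lemma qbd_le (x : ℝ) : qbd x ≤ 2 * (1 + x ^ 2)⁻¹ := by
  unfold qbd
  split
  · rename_i h
    have hx2 : x ^ 2 ≤ 1 := by nlinarith [sq_abs x, abs_nonneg x]
    rw [le_mul_inv_iff₀ (by positivity)]
    linarith
  · rename_i h
    push_neg at h
    have h2 : (1:ℝ) ≤ x ^ 2 := by nlinarith [sq_abs x, abs_nonneg x]
    have hkey : (x ^ 2)⁻¹ ≤ ((1 + x ^ 2)/2)⁻¹ :=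
      inv_anti₀ (by positivity) (by linarith)
    calc (x ^ 2)⁻¹ ≤ ((1 + x ^ 2)/2)⁻¹ := hkey
      _ = 2 * (1 + x ^ 2)⁻¹ := by rw [inv_div, div_eq_mul_inv]

lemma qbd_measurable : Measurable qbd :=
  Measurable.ite ((isClosed_le continuous_abs continuous_const).measurableSet)
    measurable_const (by fun_prop)

lemma Ssq_measurable : Measurable Ssq := by unfold Ssq; fun_prop

lemma Ssq_nonneg (x : ℝ) : 0 ≤ Ssq x := sq_nonneg _

lemma integrable_qbd : Integrable qbd := by
  refine ((integrable_inv_one_add_sq.const_mul 2).mono'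
    qbd_measurable.aestronglyMeasurable ?_)
  refine Eventually.of_forall fun x => ?_
  rw [Real.norm_eq_abs, abs_of_nonneg (qbd_nonneg x)]
  exact qbd_le x

lemma integrable_Ssq : Integrable Ssq := by
  refine integrable_qbd.mono' Ssq_measurable.aestronglyMeasurable ?_
  refine Eventually.of_forall fun x => ?_
  rw [Real.norm_eq_abs, abs_of_nonneg (Ssq_nonneg x)]
  exact Ssq_le_qbd x

lemma aux_texp (x : ℝ) (hx : 0 < x) :
    IntegrableOn (fun t => t * Real.exp (-(x*t))) (Ioi 0) ∧
      ∫ t in Ioi 0, t * Real.exp (-(x*t)) = (x^2)⁻¹ := by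
  set g : ℝ → ℝ := fun t => -(t/x + (x^2)⁻¹) * Real.exp (-(x*t)) with hg
  have hderiv : ∀ t ∈ Ioi (0:ℝ), HasDerivAt g (t * Real.exp (-(x*t))) t := by
    intro t _
    have h1 : HasDerivAt (fun t : ℝ => -(x*t)) (-x) t := by
      simpa [Pi.neg_def] using ((hasDerivAt_id t).const_mul x).neg
    have he := h1.exp
    have h2 : HasDerivAt (fun t : ℝ => -(t/x + (x^2)⁻¹)) (-(1/x)) t := by
      simpa [Pi.neg_def] using (((hasDerivAt_id t).div_const x).add_const ((x^2)⁻¹)).neg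
    have h3 := h2.mul he
    refine h3.congr_deriv ?_
    field_simp
    ring
  have hnonneg : ∀ t ∈ Ioi (0:ℝ), 0 ≤ t * Real.exp (-(x*t)) :=
    fun t ht => mul_nonneg (le_of_lt ht) (Real.exp_nonneg _)
  have hA : Tendsto (fun t : ℝ => (x*t) * Real.exp (-(x*t))) atTop (nhds 0) := by
    have := (Real.tendsto_pow_mul_exp_neg_atTop_nhds_zero 1).comp
      (tendsto_id.const_mul_atTop hx)
    simpa [Function.comp_def] using this
  have hB : Tendsto (fun t : ℝ => Real.exp (-(x*t))) atTop (nhds 0) := by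
    apply Real.tendsto_exp_atBot.comp
    exact tendsto_neg_atTop_atBot.comp (tendsto_id.const_mul_atTop hx)
  have hC := ((hA.const_mul ((x^2)⁻¹)).add (hB.const_mul ((x^2)⁻¹))).neg
  norm_num at hC
  have htend : Tendsto g atTop (nhds 0) := by
    apply hC.congr
    intro t
    rw [hg]
    field_simp
    ring
  have hcont : ContinuousWithinAt g (Ici 0) 0 :=
    Continuous.continuousWithinAt (by fun_prop)
  refine ⟨integrableOn_Ioi_deriv_of_nonneg hcont hderiv hnonneg htend, ?_⟩
  rw [integral_Ioi_of_hasDerivAt_of_nonneg hcont hderiv hnonneg htend]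
  simp [hg]

lemma aux_sinexp (t : ℝ) (ht : 0 < t) :
    IntegrableOn (fun x => Real.sin x ^ 2 * Real.exp (-(x*t))) (Ioi 0) ∧
      ∫ x in Ioi 0, Real.sin x ^ 2 * Real.exp (-(x*t)) = 2/(t*(t^2+4)) := by
  set G : ℝ → ℝ := fun x => Real.exp (-(x*t)) *
    ((t * Real.cos (2*x) - 2 * Real.sin (2*x)) / (2*(t^2+4)) - 1/(2*t)) with hG
  have hderiv : ∀ x ∈ Ioi (0:ℝ), HasDerivAt G (Real.sin x ^ 2 * Real.exp (-(x*t))) x := by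
    intro x _
    have h1 : HasDerivAt (fun x : ℝ => -(x*t)) (-t) x := by
      simpa [Pi.neg_def] using ((hasDerivAt_id x).mul_const t).neg
    have he := h1.exp
    have h2x : HasDerivAt (fun x : ℝ => 2*x) 2 x := by
      simpa using (hasDerivAt_id x).const_mul 2
    have hc : HasDerivAt (fun x : ℝ => Real.cos (2*x)) (-Real.sin (2*x) * 2) x := h2x.cos
    have hs : HasDerivAt (fun x : ℝ => Real.sin (2*x)) (Real.cos (2*x) * 2) x := h2x.sin
    have hin : HasDerivAt (fun x : ℝ =>
        (t * Real.cos (2*x) - 2 * Real.sin (2*x)) / (2*(t^2+4)) - 1/(2*t))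
        ((t * (-Real.sin (2*x) * 2) - 2 * (Real.cos (2*x) * 2)) / (2*(t^2+4))) x :=
      (((hc.const_mul t).sub (hs.const_mul 2)).div_const _).sub_const _
    have h3 := he.mul hin
    refine h3.congr_deriv ?_
    have hsin2 : Real.sin x ^ 2 = (1 - Real.cos (2*x))/2 := by
      rw [Real.cos_two_mul]
      nlinarith [Real.sin_sq_add_cos_sq x]
    rw [hsin2]
    field_simp
    ring
  have hnonneg : ∀ x ∈ Ioi (0:ℝ), 0 ≤ Real.sin x ^ 2 * Real.exp (-(x*t)) :=
    fun x _ => mul_nonneg (sq_nonneg _) (Real.exp_nonneg _)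
  have hB : Tendsto (fun x : ℝ => Real.exp (-(x*t))) atTop (nhds 0) := by
    apply Real.tendsto_exp_atBot.comp
    have : Tendsto (fun x : ℝ => x * t) atTop atTop := tendsto_id.atTop_mul_const ht
    exact tendsto_neg_atTop_atBot.comp this
  set C : ℝ := (t+2)/(2*(t^2+4)) + 1/(2*t) with hCdef
  have hbd : ∀ x : ℝ, ‖G x‖ ≤ C * Real.exp (-(x*t)) := by
    intro x
    rw [hG]
    have h1 : |t * Real.cos (2*x) - 2 * Real.sin (2*x)| ≤ t + 2 := by
      calc |t * Real.cos (2*x) - 2 * Real.sin (2*x)|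
          ≤ |t * Real.cos (2*x)| + |2 * Real.sin (2*x)| := abs_sub _ _
        _ = t * |Real.cos (2*x)| + 2 * |Real.sin (2*x)| := by
            rw [abs_mul, abs_mul, abs_of_pos ht, abs_of_pos (by norm_num : (0:ℝ) < 2)]
        _ ≤ t * 1 + 2 * 1 := by
            gcongr
            exacts [Real.abs_cos_le_one _, Real.abs_sin_le_one _]
        _ = t + 2 := by ring
    have h2 : |(t * Real.cos (2*x) - 2 * Real.sin (2*x)) / (2*(t^2+4)) - 1/(2*t)| ≤ C := by
      rw [hCdef]
      calc |(t * Real.cos (2*x) - 2 * Real.sin (2*x)) / (2*(t^2+4)) - 1/(2*t)|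
          ≤ |(t * Real.cos (2*x) - 2 * Real.sin (2*x)) / (2*(t^2+4))| + |1/(2*t)| := abs_sub _ _
        _ ≤ (t+2)/(2*(t^2+4)) + 1/(2*t) := by
            rw [abs_div, abs_of_pos (by positivity : (0:ℝ) < 2*(t^2+4)),
              abs_of_pos (by positivity : (0:ℝ) < 1/(2*t))]
            gcongr
    calc ‖Real.exp (-(x*t)) * ((t * Real.cos (2*x) - 2 * Real.sin (2*x)) / (2*(t^2+4)) - 1/(2*t))‖
        = Real.exp (-(x*t)) * |(t * Real.cos (2*x) - 2 * Real.sin (2*x)) / (2*(t^2+4)) - 1/(2*t)| := by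
          rw [Real.norm_eq_abs, abs_mul, abs_of_pos (Real.exp_pos _)]
      _ ≤ Real.exp (-(x*t)) * C := by
          apply mul_le_mul_of_nonneg_left h2 (Real.exp_nonneg _)
      _ = C * Real.exp (-(x*t)) := mul_comm _ _
  have htend : Tendsto G atTop (nhds 0) := by
    apply squeeze_zero_norm hbd
    simpa using hB.const_mul C
  have hcont : ContinuousWithinAt G (Ici 0) 0 :=
    Continuous.continuousWithinAt (by fun_prop)
  refine ⟨integrableOn_Ioi_deriv_of_nonneg hcont hderiv hnonneg htend, ?_⟩
  rw [integral_Ioi_of_hasDerivAt_of_nonneg hcont hderiv hnonneg htend]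
  rw [hG]
  simp only [mul_zero, zero_mul, neg_zero, Real.exp_zero, Real.cos_zero, Real.sin_zero, one_mul, zero_sub]
  field_simp
  ring

lemma lint_Ssq : ∫⁻ x in Ioi (0:ℝ), ENNReal.ofReal (Ssq x) = ENNReal.ofReal (Real.pi/2) := by
  have hKmeas : Measurable (fun p : ℝ × ℝ =>
      ENNReal.ofReal (Real.sin p.1 ^ 2 * (p.2 * Real.exp (-(p.1 * p.2))))) := by
    apply ENNReal.measurable_ofReal.comp
    fun_prop
  have h1 : ∀ x ∈ Ioi (0:ℝ), ∫⁻ t in Ioi (0:ℝ),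
      ENNReal.ofReal (Real.sin x ^ 2 * (t * Real.exp (-(x*t)))) = ENNReal.ofReal (Ssq x) := by
    intro x hx
    rw [← ofReal_integral_eq_lintegral_ofReal ((aux_texp x hx).1.const_mul _)
      ((ae_restrict_iff' measurableSet_Ioi).2 (Eventually.of_forall fun t ht => by
        have ht' : (0:ℝ) < t := ht
        positivity))]
    congr 1
    rw [integral_const_mul, (aux_texp x hx).2]
    unfold Ssq
    rw [div_pow, div_eq_mul_inv]
  have h2 : ∀ t ∈ Ioi (0:ℝ), ∫⁻ x in Ioi (0:ℝ),
      ENNReal.ofReal (Real.sin x ^ 2 * (t * Real.exp (-(x*t)))) = ENNReal.ofReal (2/(t^2+4)) := by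
    intro t ht
    have ht' : (0:ℝ) < t := ht
    have hfun : ∀ x : ℝ, Real.sin x ^ 2 * (t * Real.exp (-(x*t)))
        = t * (Real.sin x ^ 2 * Real.exp (-(x*t))) := fun x => by ring
    simp only [hfun]
    rw [← ofReal_integral_eq_lintegral_ofReal ((aux_sinexp t ht').1.const_mul _)
      ((ae_restrict_iff' measurableSet_Ioi).2 (Eventually.of_forall fun x _ => by positivity))]
    congr 1
    rw [integral_const_mul, (aux_sinexp t ht').2]
    field_simp
  have hint : Integrable (fun t : ℝ => 2/(t^2+4)) := by
    have hbase : Integrable (fun t : ℝ => (1/2) * (1 + ((1/2)*t)^2)⁻¹) :=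
      (integrable_inv_one_add_sq.comp_mul_left' (by norm_num : (1/2:ℝ) ≠ 0)).const_mul _
    apply hbase.congr
    refine Eventually.of_forall fun t => ?_
    field_simp
    ring
  have hval : ∫ t in Ioi (0:ℝ), 2/(t^2+4) = Real.pi/2 := by
    have heq : ∀ t : ℝ, 2/(t^2+4) = (1/2) * (1 + ((1/2:ℝ)*t)^2)⁻¹ := by
      intro t; field_simp; ring
    simp only [heq]
    rw [integral_const_mul, integral_comp_mul_left_Ioi (fun u => (1 + u^2)⁻¹) 0
      (by norm_num : (0:ℝ) < 1/2)]
    norm_num [integral_Ioi_inv_one_add_sq, Real.arctan_zero]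
    ring
  calc ∫⁻ x in Ioi (0:ℝ), ENNReal.ofReal (Ssq x)
      = ∫⁻ x in Ioi (0:ℝ), ∫⁻ t in Ioi (0:ℝ),
        ENNReal.ofReal (Real.sin x ^ 2 * (t * Real.exp (-(x*t)))) := by
        refine (setLIntegral_congr_fun measurableSet_Ioi ?_).symm
        exact h1
    _ = ∫⁻ t in Ioi (0:ℝ), ∫⁻ x in Ioi (0:ℝ),
        ENNReal.ofReal (Real.sin x ^ 2 * (t * Real.exp (-(x*t)))) := by
        exact lintegral_lintegral_swap hKmeas.aemeasurable
    _ = ∫⁻ t in Ioi (0:ℝ), ENNReal.ofReal (2/(t^2+4)) := by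
        refine setLIntegral_congr_fun measurableSet_Ioi ?_
        exact h2
    _ = ENNReal.ofReal (Real.pi/2) := by
        rw [← ofReal_integral_eq_lintegral_ofReal hint.integrableOn
          ((ae_restrict_iff' measurableSet_Ioi).2 (Eventually.of_forall fun t _ => by positivity))]
        rw [hval]

lemma setIntegral_Ssq : ∫ x in Ioi (0:ℝ), Ssq x = Real.pi/2 := by
  rw [integral_eq_lintegral_of_nonneg_ae (Eventually.of_forall fun x => Ssq_nonneg x)
    Ssq_measurable.aestronglyMeasurable.restrict]
  rw [lint_Ssq, ENNReal.toReal_ofReal (by positivity)]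

lemma integral_Ssq : ∫ x, Ssq x = Real.pi := by
  have hneg : ∀ x : ℝ, Ssq (-x) = Ssq x := by
    intro x
    unfold Ssq
    rw [Real.sin_neg, neg_div_neg_eq]
  have hcompl : ∫ x in Iic (0:ℝ), Ssq x = Real.pi/2 := by
    have h := integral_comp_neg_Ioi (0:ℝ) Ssq
    rw [neg_zero] at h
    rw [← h]
    simp only [hneg]
    exact setIntegral_Ssq
  have h := integral_add_compl (measurableSet_Ioi (a := (0:ℝ))) integrable_Ssq
  rw [compl_Ioi] at h
  rw [← h, setIntegral_Ssq, hcompl]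
  ring

lemma fejer_nonneg {T : ℝ} (hT : 0 < T) (l : ℝ) : 0 ≤ fejer T l := by
  unfold fejer
  have := Real.pi_pos
  split
  · positivity
  · positivity

lemma fejer_measurable (T : ℝ) : Measurable (fejer T) := by
  unfold fejer
  exact Measurable.ite (measurableSet_eq) measurable_const (by fun_prop)

lemma fejer_eq {T : ℝ} (hT : 0 < T) :
    ∀ᵐ l : ℝ, fejer T l = (T/(2*Real.pi)) * Ssq (T/2 * l) := by
  filter_upwards [compl_mem_ae_iff.mpr (measure_singleton (0:ℝ))] with l hl
  replace hl : l ≠ 0 := hl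
  have hπ := Real.pi_ne_zero
  unfold fejer Ssq
  rw [if_neg hl]
  have harg : T/2 * l = T * l/2 := by ring
  rw [harg, div_pow, div_pow]
  field_simp

lemma fejer_integrable {T : ℝ} (hT : 0 < T) : Integrable (fejer T) := by
  have h : Integrable (fun l => (T/(2*Real.pi)) * Ssq (T/2 * l)) :=
    (integrable_Ssq.comp_mul_left' (by positivity : (T/2 : ℝ) ≠ 0)).const_mul _
  exact h.congr (Filter.EventuallyEq.symm (fejer_eq hT))

lemma fejer_integral {T : ℝ} (hT : 0 < T) : ∫ l, fejer T l = 1 := by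
  rw [integral_congr_ae (fejer_eq hT), integral_const_mul,
    MeasureTheory.Measure.integral_comp_mul_left Ssq (T/2), integral_Ssq, smul_eq_mul,
    abs_of_pos (by positivity : (0:ℝ) < (T/2)⁻¹)]
  have hπ := Real.pi_ne_zero
  field_simp

lemma fejer_le {T u : ℝ} (hT : 0 < T) (hu : 1 ≤ |u|) :
    fejer T u ≤ 2/(Real.pi*T) * (u^2)⁻¹ := by
  have hu0 : u ≠ 0 := by
    intro h
    rw [h] at hu
    simp at hu
    linarith
  have hπ := Real.pi_pos
  unfold fejer
  rw [if_neg hu0, div_pow]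
  calc 1/(2*Real.pi*T) * (Real.sin (T*u/2)^2/(u/2)^2)
      ≤ 1/(2*Real.pi*T) * (1/(u/2)^2) := by
        gcongr
        exact Real.sin_sq_le_one _
    _ = 2/(Real.pi*T)*(u^2)⁻¹ := by
        field_simp

lemma fejer_comp_integrable {T : ℝ} (hT : 0 < T) (y : ℝ) :
    Integrable (fun x => fejer T (y - x)) :=
  (fejer_integrable hT).comp_sub_left y

lemma fejer_comp_integral {T : ℝ} (hT : 0 < T) (y : ℝ) : ∫ x, fejer T (y - x) = 1 := by
  rw [integral_sub_left_eq_self (fejer T) volume y]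
  exact fejer_integral hT

lemma exp_abs_one (θ y : ℝ) : ‖Complex.exp (Complex.I * ((θ * y : ℝ) : ℂ))‖ = 1 := by
  rw [Complex.norm_exp]
  have : (Complex.I * ((θ * y : ℝ) : ℂ)).re = 0 := by simp [Complex.mul_re]
  rw [this, Real.exp_zero]

lemma key_integrable {φ : ℝ → ℂ} (hφa : AEStronglyMeasurable φ volume)
    (hw : Integrable (fun y => ‖φ y‖ ^ 2))
    {T M : ℝ} {f : ℝ → ℝ} (hT : 0 < T) (hfm : Measurable f)
    (hf0 : ∀ l, 0 ≤ f l) (hfM : ∀ l, f l ≤ M) (θ : ℝ) :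
    Integrable (fun p : ℝ × ℝ =>
      Complex.exp (Complex.I * ((θ * p.2 : ℝ) : ℂ))
        * ((‖φ p.2‖ ^ 2 : ℝ) : ℂ)
        * ((fejer T (p.2 - p.1) * f p.1 * f p.2 : ℝ) : ℂ)) (volume.prod volume) := by
  have hM0 : 0 ≤ M := le_trans (hf0 0) (hfM 0)
  set w : ℝ → ℝ := fun y => ‖φ y‖ ^ 2 with hwdef
  have hw0 : ∀ y, 0 ≤ w y := fun y => by positivity
  set ψ : ℝ → ℂ := fun y => Complex.exp (Complex.I * ((θ * y : ℝ) : ℂ)) * ((w y : ℝ) : ℂ)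
    with hψdef
  set r : ℝ × ℝ → ℝ := fun p => fejer T (p.2 - p.1) * f p.1 * f p.2 with hrdef
  have hr0 : ∀ p, 0 ≤ r p := fun p =>
    mul_nonneg (mul_nonneg (fejer_nonneg hT _) (hf0 _)) (hf0 _)
  set G : ℝ × ℝ → ℂ := fun p => ψ p.2 * ((r p : ℝ) : ℂ) with hGdef
  have hexp : Continuous fun y : ℝ => Complex.exp (Complex.I * ((θ * y : ℝ) : ℂ)) := by
    fun_prop
  have hwa : AEStronglyMeasurable w volume := by
    refine (hφa.norm.mul hφa.norm).congr ?_
    exact Eventually.of_forall fun y => by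
      rw [hwdef]
      simp [sq]
  have hψa : AEStronglyMeasurable ψ volume :=
    hexp.aestronglyMeasurable.mul (Complex.continuous_ofReal.comp_aestronglyMeasurable hwa)
  have hrm : Measurable r := by
    apply Measurable.mul
    apply Measurable.mul
    · exact (fejer_measurable T).comp (measurable_snd.sub measurable_fst)
    · exact hfm.comp measurable_fst
    · exact hfm.comp measurable_snd
  have hGa : AEStronglyMeasurable G (volume.prod volume) := by
    apply AEStronglyMeasurable.mul
    · exact hψa.comp_quasiMeasurePreserving Measure.quasiMeasurePreserving_snd
    · exact (Complex.measurable_ofReal.comp hrm).aestronglyMeasurable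
  have hψnorm : ∀ y, ‖ψ y‖ = w y := by
    intro y
    rw [hψdef]
    simp only []
    rw [norm_mul, exp_abs_one, one_mul, Complex.norm_real, Real.norm_eq_abs,
      abs_of_nonneg (hw0 y)]
  have hGnorm : ∀ p, ‖G p‖ = w p.2 * r p := by
    intro p
    rw [hGdef]
    simp only []
    rw [norm_mul, hψnorm, Complex.norm_real, Real.norm_eq_abs, abs_of_nonneg (hr0 p)]
  refine ⟨hGa, ?_⟩
  rw [hasFiniteIntegral_iff_norm]
  have hbd : ∀ y : ℝ, ∫⁻ x, ENNReal.ofReal ‖G (x, y)‖ ≤ ENNReal.ofReal (w y * M ^ 2) := by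
    intro y
    have hb : ∀ x : ℝ, ‖G (x, y)‖ ≤ (w y * M ^ 2) * fejer T (y - x) := by
      intro x
      rw [hGnorm]
      have h1 : r (x, y) ≤ fejer T (y - x) * M * M := by
        rw [hrdef]
        simp only []
        calc fejer T (y - x) * f x * f y
            ≤ fejer T (y - x) * M * f y :=
              mul_le_mul_of_nonneg_right
                (mul_le_mul_of_nonneg_left (hfM x) (fejer_nonneg hT (y - x))) (hf0 y)
          _ ≤ fejer T (y - x) * M * M :=
              mul_le_mul_of_nonneg_left (hfM y) (mul_nonneg (fejer_nonneg hT _) hM0)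
      calc w y * r (x, y) ≤ w y * (fejer T (y - x) * M * M) :=
            mul_le_mul_of_nonneg_left h1 (hw0 y)
        _ = (w y * M ^ 2) * fejer T (y - x) := by ring
    calc ∫⁻ x, ENNReal.ofReal ‖G (x, y)‖
        ≤ ∫⁻ x, ENNReal.ofReal ((w y * M ^ 2) * fejer T (y - x)) :=
          lintegral_mono fun x => ENNReal.ofReal_le_ofReal (hb x)
      _ = ENNReal.ofReal (∫ x, (w y * M ^ 2) * fejer T (y - x)) := by
          rw [ofReal_integral_eq_lintegral_ofReal
            ((fejer_comp_integrable hT y).const_mul _)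
            (Eventually.of_forall fun x =>
              mul_nonneg (mul_nonneg (hw0 y) (by positivity)) (fejer_nonneg hT _))]
      _ = ENNReal.ofReal (w y * M ^ 2) := by
          rw [integral_const_mul, fejer_comp_integral hT y, mul_one]
  calc ∫⁻ p, ENNReal.ofReal ‖G p‖ ∂(volume.prod volume)
      = ∫⁻ y, ∫⁻ x, ENNReal.ofReal ‖G (x, y)‖ ∂volume ∂volume := by
        apply lintegral_prod_symm
        exact (ENNReal.measurable_ofReal.comp_aemeasurable hGa.norm.aemeasurable)
    _ ≤ ∫⁻ y, ENNReal.ofReal (w y * M ^ 2) ∂volume := lintegral_mono hbd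
    _ = ENNReal.ofReal (∫ y, w y * M ^ 2) := by
        rw [ofReal_integral_eq_lintegral_ofReal (hw.mul_const _)
          (Eventually.of_forall fun y => mul_nonneg (hw0 y) (by positivity))]
    _ < ⊤ := ENNReal.ofReal_lt_top

lemma f_tendsto {f : ℝ → ℝ → ℝ} {c M : ℝ} (hf : ApproxWhiteNoise f c M)
    {Δ : ℕ → ℝ} (hΔ : Tendsto Δ atTop atTop) (y : ℝ) :
    Tendsto (fun n => f (Δ n) y) atTop (nhds (c/(2*Real.pi))) := by
  obtain ⟨hc, hM, hmeas, hbdd, heven, hint, hunif⟩ := hf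
  rw [Metric.tendsto_atTop]
  intro ε hε
  obtain ⟨Δ₀, hΔ₀⟩ := hunif (|y|+1) (by positivity) (ε/2) (by positivity)
  obtain ⟨N, hN⟩ := eventually_atTop.1 (hΔ.eventually_ge_atTop Δ₀)
  refine ⟨N, fun n hn => ?_⟩
  rw [Real.dist_eq]
  have := hΔ₀ (Δ n) (hN n hn) y (by linarith [abs_nonneg y] : |y| ≤ |y| + 1)
  linarith

lemma g_tendsto {f : ℝ → ℝ → ℝ} {c M : ℝ} (hf : ApproxWhiteNoise f c M)
    {T Δ : ℕ → ℝ} (hT : Tendsto T atTop atTop) (hΔ : Tendsto Δ atTop atTop) (y : ℝ) :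
    Tendsto (fun n => ∫ x, f (Δ n) x * fejer (T n) (y - x)) atTop
      (nhds (c/(2*Real.pi))) := by
  obtain ⟨hc, hM, hmeas, hbdd, heven, hint, hunif⟩ := hf
  have hπ := Real.pi_pos
  set k : ℝ := c/(2*Real.pi) with hkdef
  have hk0 : 0 < k := by positivity
  set Cb : ℝ := M + k with hCbdef
  have hCb : 0 < Cb := by positivity
  set Iq : ℝ := ∫ x, qbd x with hIqdef
  have hIq0 : 0 ≤ Iq := integral_nonneg qbd_nonneg
  rw [Metric.tendsto_atTop]
  intro ε hε
  set A : ℝ := Cb * (2/Real.pi) * Iq with hAdef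
  have hA0 : 0 ≤ A := mul_nonneg (mul_nonneg hCb.le (by positivity)) hIq0
  obtain ⟨Δ₀, hΔ₀⟩ := hunif (|y|+1) (by positivity) (ε/3) (by positivity)
  set T₀ : ℝ := 1 + 3*A/ε with hT₀def
  have hT₀pos : 0 < T₀ := by positivity
  have hev : ∀ᶠ n in atTop, max Δ₀ 1 ≤ Δ n ∧ T₀ ≤ T n :=
    (hΔ.eventually_ge_atTop _).and (hT.eventually_ge_atTop _)
  obtain ⟨N, hN⟩ := eventually_atTop.1 hev
  refine ⟨N, fun n hn => ?_⟩
  obtain ⟨hΔn, hTn⟩ := hN n hn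
  have hΔpos : 0 < Δ n := lt_of_lt_of_le one_pos (le_trans (le_max_right _ _) hΔn)
  have hTpos : 0 < T n := lt_of_lt_of_le hT₀pos hTn
  rw [Real.dist_eq]
  have hfe_int : Integrable (fun x => f (Δ n) x * fejer (T n) (y - x)) :=
    Integrable.bdd_mul (fejer_comp_integrable hTpos y) (hmeas _ hΔpos).aestronglyMeasurable
      (c := M) (Eventually.of_forall fun x => by
        rw [Real.norm_eq_abs, abs_of_nonneg ((hbdd _ hΔpos x).1)]
        exact (hbdd _ hΔpos x).2)
  have hke_int : Integrable (fun x => k * fejer (T n) (y - x)) :=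
    (fejer_comp_integrable hTpos y).const_mul k
  have hsub : (∫ x, f (Δ n) x * fejer (T n) (y - x)) - k
      = ∫ x, (f (Δ n) x - k) * fejer (T n) (y - x) := by
    have h2 : ∫ x, k * fejer (T n) (y - x) = k := by
      rw [integral_const_mul, fejer_comp_integral hTpos y, mul_one]
    conv_lhs => rw [← h2]
    rw [← integral_sub hfe_int hke_int]
    exact integral_congr_ae (Eventually.of_forall fun x => by ring)
  rw [hsub]
  have hptbd : ∀ x, |(f (Δ n) x - k) * fejer (T n) (y - x)|
      ≤ ε/3 * fejer (T n) (y - x) + Cb * (2/(Real.pi * T n) * qbd (y - x)) := by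
    intro x
    rw [abs_mul, abs_of_nonneg (fejer_nonneg hTpos _)]
    rcases le_or_gt |y - x| 1 with h | h
    · have hx : |x| ≤ |y| + 1 := by
        have h' : x = y - (y - x) := by ring
        rw [h']
        exact le_trans (abs_sub _ _) (by linarith)
      have h1 : |f (Δ n) x - k| ≤ ε/3 := hΔ₀ (Δ n) (le_trans (le_max_left _ _) hΔn) x hx
      have h2 : 0 ≤ Cb * (2/(Real.pi * T n) * qbd (y - x)) :=
        mul_nonneg hCb.le (mul_nonneg (by positivity) (qbd_nonneg _))
      nlinarith [mul_le_mul_of_nonneg_right h1 (fejer_nonneg hTpos (y - x))]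
    · have hb := hbdd _ hΔpos x
      have h1 : |f (Δ n) x - k| ≤ Cb := by
        rw [hCbdef]
        refine abs_le.2 ⟨by linarith [hb.1], by linarith [hb.2]⟩
      have h2 : fejer (T n) (y - x) ≤ 2/(Real.pi * T n) * qbd (y - x) := by
        have hq : qbd (y - x) = ((y - x)^2)⁻¹ := by
          unfold qbd
          rw [if_neg (not_le.2 h)]
        rw [hq]
        exact fejer_le hTpos h.le
      have h3 : 0 ≤ ε/3 * fejer (T n) (y - x) :=
        mul_nonneg (by positivity) (fejer_nonneg hTpos _)
      calc |f (Δ n) x - k| * fejer (T n) (y - x)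
          ≤ Cb * fejer (T n) (y - x) :=
            mul_le_mul_of_nonneg_right h1 (fejer_nonneg hTpos _)
        _ ≤ Cb * (2/(Real.pi * T n) * qbd (y - x)) :=
            mul_le_mul_of_nonneg_left h2 hCb.le
        _ ≤ ε/3 * fejer (T n) (y - x) + Cb * (2/(Real.pi * T n) * qbd (y - x)) := by
            linarith
  have hint1 : Integrable (fun x => (f (Δ n) x - k) * fejer (T n) (y - x)) :=
    (hfe_int.sub hke_int).congr (Eventually.of_forall fun x => by
      simp only [Pi.sub_apply]
      ring)
  have hint2 : Integrable (fun x =>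
      ε/3 * fejer (T n) (y - x) + Cb * (2/(Real.pi * T n) * qbd (y - x))) :=
    ((fejer_comp_integrable hTpos y).const_mul _).add
      (((integrable_qbd.comp_sub_left y).const_mul (2/(Real.pi * T n))).const_mul Cb)
  have habs : |∫ x, (f (Δ n) x - k) * fejer (T n) (y - x)|
      ≤ ε/3 + Cb * (2/(Real.pi * T n)) * Iq := by
    calc |∫ x, (f (Δ n) x - k) * fejer (T n) (y - x)|
        ≤ ∫ x, |(f (Δ n) x - k) * fejer (T n) (y - x)| := by
          simpa only [Real.norm_eq_abs] using
            norm_integral_le_integral_norm (fun x => (f (Δ n) x - k) * fejer (T n) (y - x))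
      _ ≤ ∫ x, (ε/3 * fejer (T n) (y - x) + Cb * (2/(Real.pi * T n) * qbd (y - x))) :=
          integral_mono hint1.abs hint2 hptbd
      _ = ε/3 + Cb * (2/(Real.pi * T n)) * Iq := by
          rw [integral_add ((fejer_comp_integrable hTpos y).const_mul _)
            (((integrable_qbd.comp_sub_left y).const_mul (2/(Real.pi * T n))).const_mul Cb),
            integral_const_mul, integral_const_mul, integral_const_mul,
            fejer_comp_integral hTpos y,
            integral_sub_left_eq_self qbd volume y]
          rw [hIqdef]
          ring
  have hterm : Cb * (2/(Real.pi * T n)) * Iq ≤ ε/3 := by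
    have heq : Cb * (2/(Real.pi * T n)) * Iq = A / T n := by
      rw [hAdef]
      field_simp
    rw [heq, div_le_iff₀ hTpos]
    have h3 : ε/3 * (1 + 3*A/ε) = ε/3 + A := by
      field_simp
    have h4 : ε/3 * T₀ ≤ ε/3 * T n := mul_le_mul_of_nonneg_left hTn (by positivity)
    rw [hT₀def] at h4
    rw [h3] at h4
    linarith
  calc |∫ x, (f (Δ n) x - k) * fejer (T n) (y - x)| ≤ ε/3 + Cb * (2/(Real.pi * T n)) * Iq :=
        habs
    _ ≤ ε/3 + ε/3 := by linarith
    _ < ε := by linarith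

lemma g_bounds {T M : ℝ} {f : ℝ → ℝ} (hT : 0 < T) (hfm : Measurable f)
    (hf0 : ∀ l, 0 ≤ f l) (hfM : ∀ l, f l ≤ M) (y : ℝ) :
    0 ≤ (∫ x, f x * fejer T (y - x)) ∧ (∫ x, f x * fejer T (y - x)) ≤ M := by
  have hM0 : 0 ≤ M := le_trans (hf0 0) (hfM 0)
  have hfe_int : Integrable (fun x => f x * fejer T (y - x)) :=
    Integrable.bdd_mul (fejer_comp_integrable hT y) hfm.aestronglyMeasurable
      (c := M) (Eventually.of_forall fun x => by
        rw [Real.norm_eq_abs, abs_of_nonneg (hf0 x)]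
        exact hfM x)
  constructor
  · exact integral_nonneg fun x => mul_nonneg (hf0 x) (fejer_nonneg hT _)
  · have h := integral_mono hfe_int ((fejer_comp_integrable hT y).const_mul M)
      (fun x => mul_le_mul_of_nonneg_right (hfM x) (fejer_nonneg hT _))
    rwa [integral_const_mul, fejer_comp_integral hT y, mul_one] at h

lemma g_meas {T : ℝ} {f : ℝ → ℝ} (hfm : Measurable f) :
    Measurable fun y => ∫ x, f x * fejer T (y - x) := by
  have h : StronglyMeasurable (Function.uncurry fun y x => f x * fejer T (y - x)) :=
    ((hfm.comp measurable_snd).mul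
      ((fejer_measurable T).comp (measurable_fst.sub measurable_snd))).stronglyMeasurable
  exact h.integral_prod_right.measurable

lemma key_repr {φ : ℝ → ℂ} (hφa : AEStronglyMeasurable φ volume)
    (hw : Integrable (fun y => ‖φ y‖ ^ 2))
    {T M : ℝ} {f : ℝ → ℝ} (hT : 0 < T) (hfm : Measurable f)
    (hf0 : ∀ l, 0 ≤ f l) (hfM : ∀ l, f l ≤ M) (θ : ℝ) :
    ∫ p : ℝ × ℝ, Complex.exp (Complex.I * ((θ * p.2 : ℝ) : ℂ))
        * ((‖φ p.2‖ ^ 2 : ℝ) : ℂ)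
        * ((fejer T (p.2 - p.1) * f p.1 * f p.2 : ℝ) : ℂ) ∂(volume.prod volume)
      = ∫ y, Complex.exp (Complex.I * ((θ * y : ℝ) : ℂ))
          * ((‖φ y‖ ^ 2 : ℝ) : ℂ)
          * (((f y * ∫ x, f x * fejer T (y - x)) : ℝ) : ℂ) := by
  rw [integral_prod_symm _ (key_integrable hφa hw hT hfm hf0 hfM θ)]
  refine integral_congr_ae (Eventually.of_forall fun y => ?_)
  have h1 : ∀ x : ℝ, Complex.exp (Complex.I * ((θ * y : ℝ) : ℂ))
      * ((‖φ y‖ ^ 2 : ℝ) : ℂ)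
      * ((fejer T (y - x) * f x * f y : ℝ) : ℂ)
      = (Complex.exp (Complex.I * ((θ * y : ℝ) : ℂ)) * ((‖φ y‖ ^ 2 : ℝ) : ℂ)
          * ((f y : ℝ) : ℂ)) * ((f x * fejer T (y - x) : ℝ) : ℂ) := by
    intro x
    push_cast
    ring
  simp only [h1]
  rw [integral_const_mul]
  rw [show (∫ a : ℝ, ((f a * fejer T (y - a) : ℝ) : ℂ))
      = ((∫ a : ℝ, f a * fejer T (y - a) : ℝ) : ℂ) from integral_ofReal]
  push_cast
  ring

/-- formula (2.12), first stage of Theorem 2.1.  For an approximate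
white-noise family `(f_Δ)` and `φ ∈ L²(ℝ, ℂ)`, for all `τ₁, τ₂ ∈ ℝ` and all sequences
`T_n → ∞`, `Δ_n → ∞`, one has
`(2π/c²)∬ e^{i(τ₁−τ₂)λ₂}|φ(λ₂)|² Φ_{T_n}(λ₂−λ₁) f_{Δ_n}(λ₁) f_{Δ_n}(λ₂) dλ₁dλ₂
  → (1/(2π))∫ e^{i(τ₁−τ₂)λ}|φ(λ)|² dλ`. -/
theorem stmt3 (f : ℝ → ℝ → ℝ) (c M : ℝ) (hf : ApproxWhiteNoise f c M)
    (φ : ℝ → ℂ) (hφ : MemLp φ 2) (τ₁ τ₂ : ℝ)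
    (T Δ : ℕ → ℝ) (hT : Tendsto T atTop atTop) (hΔ : Tendsto Δ atTop atTop) :
    (∀ n : ℕ, 0 < T n → 0 < Δ n →
      Integrable (fun p : ℝ × ℝ =>
        Complex.exp (Complex.I * (((τ₁ - τ₂) * p.2 : ℝ) : ℂ))
          * ((‖φ p.2‖ ^ 2 : ℝ) : ℂ)
          * ((fejer (T n) (p.2 - p.1) * f (Δ n) p.1 * f (Δ n) p.2 : ℝ) : ℂ))) ∧
    Tendsto (fun n : ℕ => ((2 * Real.pi / c ^ 2 : ℝ) : ℂ) *
        ∫ p : ℝ × ℝ,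
          Complex.exp (Complex.I * (((τ₁ - τ₂) * p.2 : ℝ) : ℂ))
            * ((‖φ p.2‖ ^ 2 : ℝ) : ℂ)
            * ((fejer (T n) (p.2 - p.1) * f (Δ n) p.1 * f (Δ n) p.2 : ℝ) : ℂ))
      atTop
      (nhds (((1 / (2 * Real.pi) : ℝ) : ℂ) *
        ∫ l : ℝ, Complex.exp (Complex.I * (((τ₁ - τ₂) * l : ℝ) : ℂ))
          * ((‖φ l‖ ^ 2 : ℝ) : ℂ))) := by
  have hπ := Real.pi_pos
  have hφa := hφ.aestronglyMeasurable
  have hc : 0 < c := hf.1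
  have hM : 0 < M := hf.2.1
  have hmeas := hf.2.2.1
  have hbdd := hf.2.2.2.1
  have hw_int : Integrable (fun y => ‖φ y‖ ^ 2) := by
    have h2 := hφ.integrable_norm_rpow (by norm_num) (by norm_num)
    refine h2.congr (Eventually.of_forall fun y => ?_)
    simp only [ENNReal.toReal_ofNat]
    rw [show ((2:ℝ)) = ((2:ℕ):ℝ) by norm_num, Real.rpow_natCast]
  constructor
  · intro n hTn hΔn
    have h := key_integrable hφa hw_int hTn (hmeas _ hΔn)
      (fun l => (hbdd _ hΔn l).1) (fun l => (hbdd _ hΔn l).2) (τ₁ - τ₂)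
    rwa [← Measure.volume_eq_prod] at h
  obtain ⟨N, hN⟩ := eventually_atTop.1 ((hT.eventually_ge_atTop 1).and (hΔ.eventually_ge_atTop 1))
  set k : ℝ := c / (2 * Real.pi) with hkdef
  have hTshift : Tendsto (fun m : ℕ => T (m + N)) atTop atTop :=
    hT.comp (tendsto_add_atTop_nat N)
  have hΔshift : Tendsto (fun m : ℕ => Δ (m + N)) atTop atTop :=
    hΔ.comp (tendsto_add_atTop_nat N)
  have hTm : ∀ m : ℕ, 0 < T (m + N) := fun m =>
    lt_of_lt_of_le one_pos (hN (m + N) (Nat.le_add_left N m)).1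
  have hΔm : ∀ m : ℕ, 0 < Δ (m + N) := fun m =>
    lt_of_lt_of_le one_pos (hN (m + N) (Nat.le_add_left N m)).2
  have hwa : AEStronglyMeasurable (fun y => ‖φ y‖ ^ 2) volume := by
    refine (hφa.norm.mul hφa.norm).congr ?_
    exact Eventually.of_forall fun y => by simp [sq]
  have hDCT : Tendsto (fun m : ℕ => ∫ y : ℝ,
      Complex.exp (Complex.I * (((τ₁ - τ₂) * y : ℝ) : ℂ))
        * ((‖φ y‖ ^ 2 : ℝ) : ℂ)
        * (((f (Δ (m + N)) y * ∫ x, f (Δ (m + N)) x * fejer (T (m + N)) (y - x)) : ℝ) : ℂ))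
      atTop
      (nhds (∫ y : ℝ, Complex.exp (Complex.I * (((τ₁ - τ₂) * y : ℝ) : ℂ))
        * ((‖φ y‖ ^ 2 : ℝ) : ℂ) * ((k * k : ℝ) : ℂ))) := by
    apply tendsto_integral_of_dominated_convergence
      (bound := fun y => ‖φ y‖ ^ 2 * (M * M))
    · intro m
      apply AEStronglyMeasurable.mul
      apply AEStronglyMeasurable.mul
      · exact Continuous.aestronglyMeasurable (by fun_prop)
      · exact Complex.continuous_ofReal.comp_aestronglyMeasurable hwa
      · exact (Complex.measurable_ofReal.comp
          ((hmeas _ (hΔm m)).mul (g_meas (hmeas _ (hΔm m))))).aestronglyMeasurable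
    · exact hw_int.mul_const _
    · intro m
      refine Eventually.of_forall fun y => ?_
      have hb := hbdd _ (hΔm m) y
      have hg := g_bounds (hTm m) (hmeas _ (hΔm m))
        (fun l => (hbdd _ (hΔm m) l).1) (fun l => (hbdd _ (hΔm m) l).2) y
      rw [norm_mul, norm_mul, exp_abs_one, one_mul, Complex.norm_real, Complex.norm_real,
        Real.norm_eq_abs, Real.norm_eq_abs,
        abs_of_nonneg (by positivity : (0:ℝ) ≤ ‖φ y‖ ^ 2),
        abs_of_nonneg (mul_nonneg hb.1 hg.1)]
      have hMM : f (Δ (m + N)) y * (∫ x, f (Δ (m + N)) x * fejer (T (m + N)) (y - x)) ≤ M * M :=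
        mul_le_mul hb.2 hg.2 hg.1 hM.le
      exact mul_le_mul_of_nonneg_left hMM (by positivity)
    · refine Eventually.of_forall fun y => ?_
      have h2 := (f_tendsto hf hΔshift y).mul (g_tendsto hf hTshift hΔshift y)
      exact Tendsto.const_mul _ ((Complex.continuous_ofReal.tendsto _).comp h2)
  have hCk : ((2 * Real.pi / c ^ 2 : ℝ) : ℂ) * ((k * k : ℝ) : ℂ)
      = ((1 / (2 * Real.pi) : ℝ) : ℂ) := by
    rw [← Complex.ofReal_mul]
    congr 1
    rw [hkdef]
    field_simp
  have hlim : (((1 / (2 * Real.pi) : ℝ)) : ℂ) *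
      (∫ l : ℝ, Complex.exp (Complex.I * (((τ₁ - τ₂) * l : ℝ) : ℂ))
        * ((‖φ l‖ ^ 2 : ℝ) : ℂ))
      = ((2 * Real.pi / c ^ 2 : ℝ) : ℂ) *
        ∫ y : ℝ, Complex.exp (Complex.I * (((τ₁ - τ₂) * y : ℝ) : ℂ))
          * ((‖φ y‖ ^ 2 : ℝ) : ℂ) * ((k * k : ℝ) : ℂ) := by
    rw [integral_mul_const, ← hCk]
    ring
  rw [hlim]
  refine Tendsto.congr' (f₁ := fun n : ℕ => ((2 * Real.pi / c ^ 2 : ℝ) : ℂ) *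
      ∫ y : ℝ, Complex.exp (Complex.I * (((τ₁ - τ₂) * y : ℝ) : ℂ))
        * ((‖φ y‖ ^ 2 : ℝ) : ℂ)
        * (((f (Δ n) y * ∫ x, f (Δ n) x * fejer (T n) (y - x)) : ℝ) : ℂ)) ?_ ?_
  · filter_upwards [eventually_atTop.2 ⟨N, hN⟩] with n hn
    congr 1
    rw [Measure.volume_eq_prod]
    exact (key_repr hφa hw_int (lt_of_lt_of_le one_pos hn.1) (hmeas _ (lt_of_lt_of_le one_pos hn.2))
      (fun l => (hbdd _ (lt_of_lt_of_le one_pos hn.2) l).1)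
      (fun l => (hbdd _ (lt_of_lt_of_le one_pos hn.2) l).2) (τ₁ - τ₂)).symm
  · rw [← tendsto_add_atTop_iff_nat N]
    exact hDCT.const_mul _
end
end

section
/- (Theorem 2.5) Let α ∈ (0,1], c > 0, and let H : ℝ → ℝ belong to L²(ℝ) and to Lip_α(ℝ). Let (K_Δ)_{Δ>0} be a family of even real-valued functions in L¹(ℝ) ∩ L²(ℝ) such that, as Δ → ∞: ∫_ℝ K_Δ(t) dt → c; for every δ > 0, ∫_δ^∞ K_Δ(t) dt → 0 and ∫_δ^∞ K_Δ(t)² dt → 0; and for some δ > 0, ∫_{−δ}^{δ} |K_Δ(t)|·|t|^α dt → 0. Set v̂_Δ(τ) = (1/c)·∫_ℝ K_Δ(τ−s)·H(s) ds − H(τ). Then, as Δ → ∞: (I) v̂_Δ(τ) → 0 for every τ ∈ ℝ; and (II) sup_{τ∈[a,b]} |v̂_Δ(τ)| → 0 for every compact interval [a,b] ⊂ ℝ. -/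
open MeasureTheory Filter Set
open scoped ENNReal

noncomputable section

/-- The bias `v̂_Δ(τ) = (1/c)·∫ K_Δ(τ−s)·H(s) ds − H(τ)` of the correlogram estimator. -/
def biasV (c : ℝ) (K H : ℝ → ℝ) (τ : ℝ) : ℝ :=
  (1 / c) * (∫ s : ℝ, K (τ - s) * H s) - H τ

/-- Cauchy–Schwarz for integrals of real functions, in `sqrt` form. -/
private lemma cs_abs (f g : ℝ → ℝ) (hf : MemLp f 2) (hg : MemLp g 2) :
    (∫ t : ℝ, |f t| * |g t|) ≤
      Real.sqrt (∫ t : ℝ, (f t) ^ 2) * Real.sqrt (∫ t : ℝ, (g t) ^ 2) := by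
  have h22 : (2 : ℝ).HolderConjugate 2 := Real.HolderConjugate.two_two
  have hf' : MemLp f (ENNReal.ofReal 2) := by
    simpa [ENNReal.ofReal_ofNat] using hf
  have hg' : MemLp g (ENNReal.ofReal 2) := by
    simpa [ENNReal.ofReal_ofNat] using hg
  have h := integral_mul_norm_le_Lp_mul_Lq (μ := (volume : Measure ℝ)) h22 hf' hg'
  have e1 : ∀ x : ℝ, ‖x‖ ^ (2 : ℝ) = x ^ 2 := by
    intro x
    rw [Real.norm_eq_abs, show (2 : ℝ) = ((2 : ℕ) : ℝ) by norm_num,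
      Real.rpow_natCast, sq_abs]
  simp only [Real.norm_eq_abs] at h
  calc (∫ t : ℝ, |f t| * |g t|)
      ≤ (∫ t : ℝ, |f t| ^ (2:ℝ)) ^ (1/(2:ℝ)) * (∫ t : ℝ, |g t| ^ (2:ℝ)) ^ (1/(2:ℝ)) := h
    _ = Real.sqrt (∫ t : ℝ, (f t) ^ 2) * Real.sqrt (∫ t : ℝ, (g t) ^ 2) := by
        rw [Real.sqrt_eq_rpow, Real.sqrt_eq_rpow]
        congr 1
        · congr 1; exact integral_congr_ae (Eventually.of_forall fun x => by
            simpa [Real.norm_eq_abs] using e1 (f x))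
        · congr 1; exact integral_congr_ae (Eventually.of_forall fun x => by
            simpa [Real.norm_eq_abs] using e1 (g x))

/-- A locally Hölder function is continuous. -/
private lemma cont_of_lip {H : ℝ → ℝ} {M₀ δ₁ α : ℝ} (hα : 0 < α) (hδ : 0 < δ₁)
    (h : ∀ t s : ℝ, |t - s| ≤ δ₁ → |H t - H s| ≤ M₀ * |t - s| ^ α) :
    Continuous H := by
  rw [continuous_iff_continuousAt]
  intro x
  have habs : Tendsto (fun t : ℝ => |t - x|) (nhds x) (nhds 0) := by
    have : Continuous fun t : ℝ => |t - x| := (continuous_id.sub continuous_const).abs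
    simpa using this.tendsto x
  have hpow : Tendsto (fun t : ℝ => |t - x| ^ α) (nhds x) (nhds 0) := by
    have hc : ContinuousAt (fun y : ℝ => y ^ α) 0 :=
      Real.continuousAt_rpow_const 0 α (Or.inr hα.le)
    have := hc.tendsto.comp habs
    simpa [Function.comp_def, Real.zero_rpow hα.ne'] using this
  have hmul : Tendsto (fun t : ℝ => M₀ * |t - x| ^ α) (nhds x) (nhds 0) := by
    simpa using hpow.const_mul M₀
  have hev : ∀ᶠ t : ℝ in nhds x, |H t - H x| ≤ M₀ * |t - x| ^ α := by
    have : ∀ᶠ t : ℝ in nhds x, |t - x| ≤ δ₁ := by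
      have := habs.eventually (eventually_le_nhds (by linarith : (0:ℝ) < δ₁))
      simpa using this
    filter_upwards [this] with t ht using h t x ht
  have hdist : Tendsto (fun t : ℝ => |H t - H x|) (nhds x) (nhds 0) :=
    squeeze_zero' (Eventually.of_forall fun t => abs_nonneg _) hev hmul
  rw [ContinuousAt, tendsto_iff_dist_tendsto_zero]
  simpa [Real.dist_eq] using hdist

/-- Integral of an even function over the complement of `Icc (-d) d`. -/
private lemma integral_compl_Icc_of_even {f : ℝ → ℝ} (hf : Integrable f) {d : ℝ}
    (hd : 0 < d) (heven : ∀ t : ℝ, f (-t) = f t) :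
    ∫ t in (Icc (-d) d)ᶜ, f t = 2 * ∫ t in Ioi d, f t := by
  have hcompl : (Icc (-d) d)ᶜ = Iio (-d) ∪ Ioi d := by
    ext x
    simp only [mem_compl_iff, mem_Icc, mem_union, mem_Iio, mem_Ioi, not_and_or, not_le]
  have hdisj : Disjoint (Iio (-d)) (Ioi d) :=
    (Iio_disjoint_Ici (by linarith)).mono_right Ioi_subset_Ici_self
  have hrefl : ∫ t in Iio (-d), f t = ∫ t in Ioi d, f t := by
    rw [← integral_Iic_eq_integral_Iio]
    have h1 : ∫ x in Ioi d, f (-x) = ∫ x in Iic (-d), f x := integral_comp_neg_Ioi d f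
    rw [← h1]
    exact setIntegral_congr_fun measurableSet_Ioi fun x _ => heven x
  rw [hcompl, setIntegral_union hdisj measurableSet_Ioi hf.integrableOn hf.integrableOn,
    hrefl]
  ring

/-- Theorem 2.5.  Let `α ∈ (0,1]`, `c > 0`, `H ∈ L²(ℝ) ∩ Lip_α(ℝ)`
real-valued, and let `(K_Δ)_{Δ>0}` be a family of even real-valued functions in
`L¹(ℝ) ∩ L²(ℝ)` such that, as `Δ → ∞`: `∫ K_Δ → c`; for all `δ > 0`,
`∫_δ^∞ K_Δ → 0` and `∫_δ^∞ K_Δ² → 0`; and for some `δ > 0`,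
`∫_{−δ}^{δ} |K_Δ(t)||t|^α dt → 0`.  Then `v̂_Δ(τ) → 0` for every `τ`, and uniformly on
every compact interval `[a,b]`. -/
theorem stmt7 (α c : ℝ) (hα : α ∈ Set.Ioc (0 : ℝ) 1) (hc : 0 < c)
    (H : ℝ → ℝ) (hH2 : MemLp H 2)
    (hHlip : ∃ M₀ > (0 : ℝ), ∃ δ₁ > (0 : ℝ), ∀ t s : ℝ,
      |t - s| ≤ δ₁ → |H t - H s| ≤ M₀ * |t - s| ^ α)
    (K : ℝ → ℝ → ℝ)
    (hKeven : ∀ Δ : ℝ, 0 < Δ → ∀ t : ℝ, K Δ (-t) = K Δ t)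
    (hK1 : ∀ Δ : ℝ, 0 < Δ → Integrable (K Δ))
    (hK2 : ∀ Δ : ℝ, 0 < Δ → MemLp (K Δ) 2)
    (hKc : Tendsto (fun Δ : ℝ => ∫ t : ℝ, K Δ t) atTop (nhds c))
    (hKa : ∀ δ : ℝ, 0 < δ →
      Tendsto (fun Δ : ℝ => ∫ t in Set.Ioi δ, K Δ t) atTop (nhds 0))
    (hKb : ∀ δ : ℝ, 0 < δ →
      Tendsto (fun Δ : ℝ => ∫ t in Set.Ioi δ, (K Δ t) ^ 2) atTop (nhds 0))
    (hKv : ∃ δ > (0 : ℝ),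
      Tendsto (fun Δ : ℝ => ∫ t in Set.Icc (-δ) δ, |K Δ t| * |t| ^ α) atTop (nhds 0)) :
    (∀ τ : ℝ, Tendsto (fun Δ : ℝ => biasV c (K Δ) H τ) atTop (nhds 0)) ∧
    (∀ a b : ℝ, ∀ ε : ℝ, 0 < ε →
      ∀ᶠ Δ : ℝ in atTop, ∀ τ ∈ Set.Icc a b, |biasV c (K Δ) H τ| < ε) := by
  obtain ⟨hα0, hα1⟩ := hα
  obtain ⟨M₀, hM₀, δ₁, hδ₁, hlip⟩ := hHlip
  obtain ⟨δ₀, hδ₀, hA⟩ := hKv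
  set d : ℝ := min δ₁ δ₀ with hd_def
  have hd : 0 < d := lt_min hδ₁ hδ₀
  have hdδ₁ : d ≤ δ₁ := min_le_left _ _
  have hdδ₀ : d ≤ δ₀ := min_le_right _ _
  set S : Set ℝ := Icc (-d) d with hS_def
  have hS : MeasurableSet S := measurableSet_Icc
  set N : ℝ := Real.sqrt (∫ t : ℝ, (H t) ^ 2) with hN_def
  have hN0 : 0 ≤ N := Real.sqrt_nonneg _
  set A : ℝ → ℝ := fun Δ => ∫ t in Icc (-δ₀) δ₀, |K Δ t| * |t| ^ α with hA_def
  set B : ℝ → ℝ := fun Δ => ∫ t in Ioi d, (K Δ t) ^ 2 with hB_def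
  set C : ℝ → ℝ := fun Δ => (∫ t : ℝ, K Δ t) - c with hC_def
  set D : ℝ → ℝ := fun Δ => ∫ t in Ioi d, K Δ t with hD_def
  -- the master pointwise bound
  have key : ∀ Δ : ℝ, 0 < Δ → ∀ τ : ℝ,
      |biasV c (K Δ) H τ| ≤ (1 / c) * (M₀ * A Δ + Real.sqrt (2 * B Δ) * N
        + |H τ| * (|C Δ| + 2 * |D Δ|)) := by
    intro Δ hΔ τ
    set k : ℝ → ℝ := K Δ with hk_def
    have hk1 : Integrable k := hK1 Δ hΔ
    have hk2 : MemLp k 2 := hK2 Δ hΔ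
    have hkeven : ∀ t : ℝ, k (-t) = k t := hKeven Δ hΔ
    -- H translated is in L²
    have hHτ2 : MemLp (fun t : ℝ => H (τ - t)) 2 := by
      have hmp : MeasurePreserving (fun t : ℝ => τ - t) volume volume :=
        Measure.measurePreserving_sub_left volume τ
      simpa [Function.comp_def] using hH2.comp_measurePreserving hmp
    -- the product is integrable
    have hG : Integrable (fun t : ℝ => k t * H (τ - t)) := by
      have hpqr : (1 : ℝ≥0∞) / 1 = 1 / 2 + 1 / 2 := by
        rw [ENNReal.add_halves]; norm_num
      have := (hHτ2.smul hk2 : MemLp (k • (fun t : ℝ => H (τ - t))) 1)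
      rw [memLp_one_iff_integrable] at this
      simpa [Pi.smul_apply', smul_eq_mul, Pi.mul_def] using this
    have hGsub : Integrable (fun t : ℝ => k t * (H (τ - t) - H τ)) := by
      have h1 : Integrable (fun t : ℝ => k t * H (τ - t) - k t * H τ) :=
        hG.sub (hk1.mul_const (H τ))
      refine h1.congr (Eventually.of_forall fun t => by ring)
    -- change of variables
    have step0 : (∫ s : ℝ, k (τ - s) * H s) = ∫ t : ℝ, k t * H (τ - t) := by
      have := integral_sub_left_eq_self (fun u : ℝ => k u * H (τ - u)) volume τ
      simpa [sub_sub_cancel] using this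
    -- splitting of the integral
    set E1 : ℝ := ∫ t in S, k t * (H (τ - t) - H τ) with hE1_def
    set E2 : ℝ := ∫ t in Sᶜ, k t * H (τ - t) with hE2_def
    set KS : ℝ := ∫ t in S, k t with hKS_def
    set Kco : ℝ := ∫ t in Sᶜ, k t with hKco_def
    have hsplit : (∫ t : ℝ, k t * H (τ - t))
        = (∫ t in S, k t * H (τ - t)) + E2 :=
      (integral_add_compl hS hG).symm
    have hinner : (∫ t in S, k t * H (τ - t)) = E1 + KS * H τ := by
      have heq : ∀ t : ℝ, k t * H (τ - t) = k t * (H (τ - t) - H τ) + k t * H τ :=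
        fun t => by ring
      calc (∫ t in S, k t * H (τ - t))
          = ∫ t in S, (k t * (H (τ - t) - H τ) + k t * H τ) := by
            exact integral_congr_ae (Eventually.of_forall fun t => heq t)
        _ = E1 + ∫ t in S, k t * H τ :=
            integral_add hGsub.integrableOn (hk1.mul_const (H τ)).integrableOn
        _ = E1 + KS * H τ := by rw [integral_mul_const]
    have hKsum : KS + Kco = ∫ t : ℝ, k t := integral_add_compl hS hk1
    have hKS_eq : KS = C Δ + c - Kco := by
      have : KS = (∫ t : ℝ, k t) - Kco := by linarith
      rw [this, hC_def]; ring
    -- the bias identity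
    have hbias : biasV c k H τ = (1 / c) * (E1 + E2 + H τ * (C Δ - Kco)) := by
      have hcne : c ≠ 0 := hc.ne'
      simp only [biasV]
      rw [step0, hsplit, hinner, hKS_eq]
      field_simp
      ring
    -- bound on E1
    have hE1bound : |E1| ≤ M₀ * A Δ := by
      have habs : |E1| ≤ ∫ t in S, |k t| * |H (τ - t) - H τ| := by
        simpa [Real.norm_eq_abs] using
          norm_integral_le_integral_norm (μ := volume.restrict S)
            (fun t : ℝ => k t * (H (τ - t) - H τ))
      -- integrability of the Hölder majorant on the big interval
      have hintA : IntegrableOn (fun t : ℝ => |k t| * |t| ^ α) (Icc (-δ₀) δ₀) := by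
        refine Integrable.mono' ((hk1.abs.const_mul (δ₀ ^ α)).integrableOn) ?_ ?_
        · exact (hk1.abs.aestronglyMeasurable.mul
            (((Real.continuous_rpow_const hα0.le).comp
              continuous_abs).aestronglyMeasurable)).restrict
        · filter_upwards [ae_restrict_mem (measurableSet_Icc :
            MeasurableSet (Icc (-δ₀) δ₀))] with t ht
          have ht' : |t| ≤ δ₀ := abs_le.mpr ⟨ht.1, ht.2⟩
          have h1 : |t| ^ α ≤ δ₀ ^ α := Real.rpow_le_rpow (abs_nonneg _) ht' hα0.le
          have h2 : (0:ℝ) ≤ |k t| * |t| ^ α :=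
            mul_nonneg (abs_nonneg _) (Real.rpow_nonneg (abs_nonneg _) _)
          rw [Real.norm_eq_abs, abs_of_nonneg h2]
          calc |k t| * |t| ^ α ≤ |k t| * δ₀ ^ α :=
                mul_le_mul_of_nonneg_left h1 (abs_nonneg _)
            _ = δ₀ ^ α * |k t| := by ring
      have hmono : (∫ t in S, |k t| * |H (τ - t) - H τ|)
          ≤ ∫ t in S, M₀ * (|k t| * |t| ^ α) := by
        refine setIntegral_mono_on ?_ ?_ hS ?_
        · refine (hGsub.abs.integrableOn).congr_fun (fun t _ => (abs_mul _ _)) hS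
        · exact (hintA.mono_set (Icc_subset_Icc (neg_le_neg hdδ₀) hdδ₀)).const_mul M₀
        · intro t ht
          have htd : |t| ≤ d := abs_le.mpr ⟨ht.1, ht.2⟩
          have hlip' : |H (τ - t) - H τ| ≤ M₀ * |t| ^ α := by
            have h1 : |(τ - t) - τ| ≤ δ₁ := by
              rw [show (τ - t) - τ = -t by ring, abs_neg]
              exact htd.trans hdδ₁
            have := hlip (τ - t) τ h1
            rwa [show (τ - t) - τ = -t by ring, abs_neg] at this
          calc |k t| * |H (τ - t) - H τ|
              ≤ |k t| * (M₀ * |t| ^ α) := mul_le_mul_of_nonneg_left hlip' (abs_nonneg _)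
            _ = M₀ * (|k t| * |t| ^ α) := by ring
      have hpull : (∫ t in S, M₀ * (|k t| * |t| ^ α))
          = M₀ * ∫ t in S, |k t| * |t| ^ α := integral_const_mul _ _
      have hsubset : (∫ t in S, |k t| * |t| ^ α) ≤ A Δ := by
        refine setIntegral_mono_set hintA ?_ ?_
        · exact Eventually.of_forall fun t =>
            mul_nonneg (abs_nonneg _) (Real.rpow_nonneg (abs_nonneg _) _)
        · exact HasSubset.Subset.eventuallyLE
            (Icc_subset_Icc (neg_le_neg hdδ₀) hdδ₀)
      calc |E1| ≤ ∫ t in S, |k t| * |H (τ - t) - H τ| := habs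
        _ ≤ ∫ t in S, M₀ * (|k t| * |t| ^ α) := hmono
        _ = M₀ * ∫ t in S, |k t| * |t| ^ α := hpull
        _ ≤ M₀ * A Δ := mul_le_mul_of_nonneg_left hsubset hM₀.le
    -- bound on E2 via Cauchy–Schwarz
    have hE2bound : |E2| ≤ Real.sqrt (2 * B Δ) * N := by
      set f : ℝ → ℝ := Sᶜ.indicator k with hf_def
      have hf2 : MemLp f 2 := hk2.indicator hS.compl
      have habs : |E2| ≤ ∫ t in Sᶜ, |k t| * |H (τ - t)| := by
        simpa [Real.norm_eq_abs] using
          norm_integral_le_integral_norm (μ := volume.restrict Sᶜ)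
            (fun t : ℝ => k t * H (τ - t))
      have hind : (∫ t in Sᶜ, |k t| * |H (τ - t)|)
          = ∫ t : ℝ, |f t| * |H (τ - t)| := by
        rw [← integral_indicator hS.compl]
        refine integral_congr_ae (Eventually.of_forall fun t => ?_)
        by_cases h : t ∈ Sᶜ
        · simp [hf_def, Set.indicator_of_mem h, abs_mul]
        · simp [hf_def, Set.indicator_of_notMem h]
      have hcs := cs_abs f (fun t : ℝ => H (τ - t)) hf2 hHτ2
      have hsq : (∫ t : ℝ, (f t) ^ 2) = ∫ t in Sᶜ, (k t) ^ 2 := by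
        rw [← integral_indicator hS.compl]
        refine integral_congr_ae (Eventually.of_forall fun t => ?_)
        by_cases h : t ∈ Sᶜ
        · simp [hf_def, Set.indicator_of_mem h]
        · simp [hf_def, Set.indicator_of_notMem h]
      have hk2even : ∀ t : ℝ, (k (-t)) ^ 2 = (k t) ^ 2 := fun t => by rw [hkeven]
      have hco2 : (∫ t in Sᶜ, (k t) ^ 2) = 2 * B Δ := by
        have := integral_compl_Icc_of_even (hk2.integrable_sq) hd hk2even
        simpa [hS_def, hB_def] using this
      have hHshift : (∫ t : ℝ, (H (τ - t)) ^ 2) = ∫ t : ℝ, (H t) ^ 2 := by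
        simpa using integral_sub_left_eq_self (fun u : ℝ => (H u) ^ 2) volume τ
      calc |E2| ≤ ∫ t in Sᶜ, |k t| * |H (τ - t)| := habs
        _ = ∫ t : ℝ, |f t| * |H (τ - t)| := hind
        _ ≤ Real.sqrt (∫ t : ℝ, (f t) ^ 2) * Real.sqrt (∫ t : ℝ, (H (τ - t)) ^ 2) := hcs
        _ = Real.sqrt (2 * B Δ) * N := by rw [hsq, hco2, hHshift, hN_def]
    -- bound on the tail of K
    have hKco2D : Kco = 2 * D Δ := by
      have := integral_compl_Icc_of_even hk1 hd hkeven
      simpa [hS_def, hKco_def, hD_def] using this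
    -- put everything together
    rw [hbias, abs_mul, abs_of_nonneg (by positivity : (0:ℝ) ≤ 1 / c)]
    refine mul_le_mul_of_nonneg_left ?_ (by positivity)
    calc |E1 + E2 + H τ * (C Δ - Kco)|
        ≤ |E1| + |E2| + |H τ * (C Δ - Kco)| := abs_add_three _ _ _
      _ ≤ M₀ * A Δ + Real.sqrt (2 * B Δ) * N + |H τ| * (|C Δ| + 2 * |D Δ|) := by
          refine add_le_add (add_le_add hE1bound hE2bound) ?_
          rw [abs_mul]
          refine mul_le_mul_of_nonneg_left ?_ (abs_nonneg _)
          calc |C Δ - Kco| ≤ |C Δ| + |Kco| := abs_sub _ _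
            _ = |C Δ| + 2 * |D Δ| := by rw [hKco2D, abs_mul, abs_two]
  -- convergence of the bound
  have hbnd : ∀ M : ℝ, Tendsto (fun Δ : ℝ => (1 / c) * (M₀ * A Δ
      + Real.sqrt (2 * B Δ) * N + M * (|C Δ| + 2 * |D Δ|))) atTop (nhds 0) := by
    intro M
    have hB : Tendsto B atTop (nhds 0) := hKb d hd
    have hD : Tendsto D atTop (nhds 0) := hKa d hd
    have hC : Tendsto C atTop (nhds 0) := by
      have := hKc.sub_const c
      simpa [hC_def] using this
    have h1 : Tendsto (fun Δ : ℝ => M₀ * A Δ) atTop (nhds 0) := by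
      simpa using hA.const_mul M₀
    have h2a : Tendsto (fun Δ : ℝ => 2 * B Δ) atTop (nhds 0) := by
      simpa using hB.const_mul 2
    have h2b : Tendsto (fun Δ : ℝ => Real.sqrt (2 * B Δ)) atTop (nhds 0) := by
      have := (Real.continuous_sqrt.tendsto 0).comp h2a
      simpa only [Function.comp_def, Real.sqrt_zero] using this
    have h2 : Tendsto (fun Δ : ℝ => Real.sqrt (2 * B Δ) * N) atTop (nhds 0) := by
      simpa using h2b.mul_const N
    have h3a : Tendsto (fun Δ : ℝ => |C Δ|) atTop (nhds 0) := by
      have := (continuous_abs.tendsto 0).comp hC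
      simpa [Function.comp_def] using this
    have h3b : Tendsto (fun Δ : ℝ => |D Δ|) atTop (nhds 0) := by
      have := (continuous_abs.tendsto 0).comp hD
      simpa [Function.comp_def] using this
    have h3 : Tendsto (fun Δ : ℝ => M * (|C Δ| + 2 * |D Δ|)) atTop (nhds 0) := by
      have := (h3a.add (by simpa using h3b.const_mul (2:ℝ))).const_mul M
      simpa using this
    have := ((h1.add h2).add h3).const_mul (1 / c)
    simpa using this
  -- the uniform statement, parametrized by a bound on |H|
  have main : ∀ M : ℝ, ∀ ε : ℝ, 0 < ε →
      ∀ᶠ Δ : ℝ in atTop, ∀ τ : ℝ, |H τ| ≤ M → |biasV c (K Δ) H τ| < ε := by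
    intro M ε hε
    have hev1 : ∀ᶠ Δ : ℝ in atTop, (1 / c) * (M₀ * A Δ
        + Real.sqrt (2 * B Δ) * N + M * (|C Δ| + 2 * |D Δ|)) < ε := by
      have := (hbnd M).eventually (eventually_lt_nhds hε)
      simpa using this
    filter_upwards [hev1, eventually_gt_atTop (0:ℝ)] with Δ h1 hΔ
    intro τ hτ
    refine lt_of_le_of_lt ((key Δ hΔ τ).trans ?_) h1
    refine mul_le_mul_of_nonneg_left ?_ (by positivity)
    refine add_le_add (le_refl _) ?_
    refine mul_le_mul_of_nonneg_right hτ ?_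
    positivity
  constructor
  · intro τ
    rw [Metric.tendsto_nhds]
    intro ε hε
    filter_upwards [main (|H τ|) ε hε] with Δ h
    simpa [Real.dist_eq] using h τ le_rfl
  · intro a b ε hε
    have hcont : Continuous H := cont_of_lip hα0 hδ₁ hlip
    obtain ⟨M, hM⟩ := (isCompact_Icc (a := a) (b := b)).exists_bound_of_continuousOn
      hcont.continuousOn
    filter_upwards [main M ε hε] with Δ h
    intro τ hτ
    exact h τ (by simpa [Real.norm_eq_abs] using hM τ hτ)
end
end

section
/- (Lemma 2.5 of §2.4.1) Let α ∈ (0,1], c > 0, let H : ℝ → ℝ belong to L²(ℝ) and to Lip_α(ℝ), and let (K_Δ)_{Δ>0} be a family of even real-valued functions in L¹(ℝ) ∩ L²(ℝ). Set v̂_Δ(τ) = (1/c)·∫_ℝ K_Δ(τ−s)·H(s) ds − H(τ). Suppose T_n → ∞ and Δ_n → ∞ are sequences such that: √T_n·(1 − (1/c)·∫_ℝ K_{Δ_n}(t) dt) → 0; for every δ > 0, √T_n·∫_δ^∞ K_{Δ_n}(t) dt → 0 and T_n·∫_δ^∞ K_{Δ_n}(t)² dt → 0; and for some δ > 0, √T_n·∫_{−δ}^{δ}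 |K_{Δ_n}(t)|·|t|^α dt → 0. Then: (I) √T_n·v̂_{Δ_n}(τ) → 0 for every τ ∈ ℝ; and (II) sup_{τ∈[a,b]} √T_n·|v̂_{Δ_n}(τ)| → 0 for every compact interval [a,b] ⊂ ℝ. -/
open MeasureTheory Filter Set

noncomputable section

/-- Lemma 2.5 of §2.4.1.  Let `α ∈ (0,1]`, `c > 0`,
`H ∈ L²(ℝ) ∩ Lip_α(ℝ)` real-valued, `(K_Δ)_{Δ>0}` a family of even real-valued functions
in `L¹(ℝ) ∩ L²(ℝ)`, and `T_n → ∞`, `Δ_n → ∞` sequences such that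
`√T_n(1 − (1/c)∫K_{Δ_n}) → 0`; for all `δ > 0`, `√T_n∫_δ^∞ K_{Δ_n} → 0` and
`T_n∫_δ^∞ K_{Δ_n}² → 0`; and for some `δ > 0`, `√T_n∫_{−δ}^{δ}|K_{Δ_n}(t)||t|^α dt → 0`.
Then `√T_n·v̂_{Δ_n}(τ) → 0` for every `τ`, and uniformly on every compact interval. -/
theorem stmt8 (α c : ℝ) (hα : α ∈ Set.Ioc (0 : ℝ) 1) (hc : 0 < c)
    (H : ℝ → ℝ) (hH2 : MemLp H 2)
    (hHlip : ∃ M₀ > (0 : ℝ), ∃ δ₁ > (0 : ℝ), ∀ t s : ℝ,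
      |t - s| ≤ δ₁ → |H t - H s| ≤ M₀ * |t - s| ^ α)
    (K : ℝ → ℝ → ℝ)
    (hKeven : ∀ Δ : ℝ, 0 < Δ → ∀ t : ℝ, K Δ (-t) = K Δ t)
    (hK1 : ∀ Δ : ℝ, 0 < Δ → Integrable (K Δ))
    (hK2 : ∀ Δ : ℝ, 0 < Δ → MemLp (K Δ) 2)
    (T Δ : ℕ → ℝ) (hT : Tendsto T atTop atTop) (hΔ : Tendsto Δ atTop atTop)
    (hbal0 : Tendsto (fun n : ℕ =>
      Real.sqrt (T n) * (1 - (1 / c) * ∫ t : ℝ, K (Δ n) t)) atTop (nhds 0))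
    (hbal1 : ∀ δ : ℝ, 0 < δ → Tendsto (fun n : ℕ =>
      Real.sqrt (T n) * ∫ t in Set.Ioi δ, K (Δ n) t) atTop (nhds 0))
    (hbal2 : ∀ δ : ℝ, 0 < δ → Tendsto (fun n : ℕ =>
      T n * ∫ t in Set.Ioi δ, (K (Δ n) t) ^ 2) atTop (nhds 0))
    (hbal3 : ∃ δ > (0 : ℝ), Tendsto (fun n : ℕ =>
      Real.sqrt (T n) * ∫ t in Set.Icc (-δ) δ, |K (Δ n) t| * |t| ^ α) atTop (nhds 0)) :
    (∀ τ : ℝ, Tendsto (fun n : ℕ =>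
      Real.sqrt (T n) * biasV c (K (Δ n)) H τ) atTop (nhds 0)) ∧
    (∀ a b : ℝ, ∀ ε : ℝ, 0 < ε →
      ∀ᶠ n : ℕ in atTop, ∀ τ ∈ Set.Icc a b,
        Real.sqrt (T n) * |biasV c (K (Δ n)) H τ| < ε) := by
  obtain ⟨hα0, hα1⟩ := hα
  obtain ⟨M₀, hM₀, δ₁, hδ₁, hlip⟩ := hHlip
  obtain ⟨δ₃, hδ₃, hb3⟩ := hbal3
  set δ : ℝ := min δ₁ δ₃ with hδdef
  have hδpos : 0 < δ := lt_min hδ₁ hδ₃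
  have hδle₁ : δ ≤ δ₁ := min_le_left _ _
  have hδle₃ : δ ≤ δ₃ := min_le_right _ _
  have h1c : (0:ℝ) ≤ 1 / c := by positivity
  -- continuity of H
  have hHcont : Continuous H := by
    rw [continuous_iff_continuousAt]
    intro x
    have h0 : Tendsto (fun y : ℝ => M₀ * |y - x| ^ α) (nhds x) (nhds 0) := by
      have h1 : Tendsto (fun y : ℝ => |y - x|) (nhds x) (nhds 0) := by
        have := ((continuous_id.sub (continuous_const (y := x))).abs).tendsto x
        simpa using this
      have h2 : Tendsto (fun y : ℝ => |y - x| ^ α) (nhds x) (nhds ((0:ℝ) ^ α)) :=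
        h1.rpow_const (Or.inr hα0.le)
      rw [Real.zero_rpow hα0.ne'] at h2
      simpa using h2.const_mul M₀
    rw [ContinuousAt, tendsto_iff_dist_tendsto_zero]
    refine squeeze_zero' (Eventually.of_forall fun y => dist_nonneg) ?_ h0
    filter_upwards [Metric.closedBall_mem_nhds x hδ₁] with y hy
    rw [Real.dist_eq]
    exact hlip y x (by simpa [Real.dist_eq] using hy)
  have hIH2 : Integrable (fun s : ℝ => H s ^ 2) := hH2.integrable_sq
  set HL : ℝ := Real.sqrt (∫ s : ℝ, H s ^ 2) with hHLdef
  have hHLnn : 0 ≤ HL := Real.sqrt_nonneg _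
  have habs2 : ∀ x : ℝ, |x| ^ (2:ℝ) = x ^ 2 := fun x => by
    rw [show (2:ℝ) = ((2:ℕ):ℝ) by norm_num, Real.rpow_natCast, sq_abs]
  -- integrability of |K|·|t|^α on Icc (-δ₃) δ₃
  have hkα : ∀ Δ' : ℝ, 0 < Δ' →
      IntegrableOn (fun t => |K Δ' t| * |t| ^ α) (Icc (-δ₃) δ₃) := by
    intro Δ' h
    refine Integrable.mono' (((hK1 Δ' h).norm.const_mul (δ₃ ^ α)).integrableOn) ?_ ?_
    · exact ((hK1 Δ' h).1.norm.mul
        ((continuous_abs.rpow_const fun x => Or.inr hα0.le).aestronglyMeasurable)).restrict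
    · rw [ae_restrict_iff' measurableSet_Icc]
      refine Eventually.of_forall fun t ht => ?_
      have h1 : |t| ≤ δ₃ := abs_le.2 ⟨ht.1, ht.2⟩
      have h2 : |t| ^ α ≤ δ₃ ^ α := Real.rpow_le_rpow (abs_nonneg t) h1 hα0.le
      calc ‖|K Δ' t| * |t| ^ α‖ = |K Δ' t| * |t| ^ α := by
            rw [Real.norm_of_nonneg
              (mul_nonneg (abs_nonneg _) (Real.rpow_nonneg (abs_nonneg _) _))]
        _ ≤ |K Δ' t| * δ₃ ^ α := by
            exact mul_le_mul_of_nonneg_left h2 (abs_nonneg _)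
        _ = δ₃ ^ α * ‖K Δ' t‖ := by rw [mul_comm, Real.norm_eq_abs]
  -- even function identity
  have heven : ∀ f : ℝ → ℝ, (∀ t, f (-t) = f t) → Integrable f →
      (∫ t in (Icc (-δ) δ)ᶜ, f t) = 2 * ∫ t in Ioi δ, f t := by
    intro f hf hfi
    have h1 : (∫ t in Ioi δ, f t) = ∫ t in Iic (-δ), f t := by
      rw [← integral_comp_neg_Ioi]
      simp_rw [hf]
    have hdisj : Disjoint (Iio (-δ)) (Ioi δ) :=
      (Iic_disjoint_Ioi (by linarith : (-δ:ℝ) ≤ δ)).mono_left Iio_subset_Iic_self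
    have hcompl : (Icc (-δ) δ)ᶜ = Iio (-δ) ∪ Ioi δ := by
      rw [← Set.Iic_inter_Ici, Set.compl_inter, Set.compl_Iic, Set.compl_Ici]
      exact Set.union_comm _ _
    rw [hcompl, setIntegral_union hdisj measurableSet_Ioi
      hfi.integrableOn hfi.integrableOn]
    rw [← integral_Iic_eq_integral_Iio, ← h1]
    ring
  -- shifts
  have hshift : ∀ τ : ℝ, MemLp (fun t => H (τ - t)) 2 (volume : Measure ℝ) := by
    intro τ
    have := hH2.comp_measurePreserving (Measure.measurePreserving_sub_left (volume : Measure ℝ) τ)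
    exact this
  have hint1 : ∀ Δ' : ℝ, 0 < Δ' → ∀ τ : ℝ, Integrable (fun t => K Δ' t * H (τ - t)) := by
    intro Δ' hΔ' τ
    have h2 : MemLp (K Δ' • fun t => H (τ - t)) 1 (volume : Measure ℝ) :=
      (hshift τ).smul (hK2 Δ' hΔ')
    have h3 := memLp_one_iff_integrable.1 h2
    exact h3
  -- the key pointwise estimate
  have key : ∀ n : ℕ, 0 < Δ n → 0 ≤ T n → ∀ τ : ℝ,
      Real.sqrt (T n) * |biasV c (K (Δ n)) H τ| ≤
        (1/c) * (M₀ * (Real.sqrt (T n) * ∫ t in Icc (-δ) δ, |K (Δ n) t| * |t| ^ α)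
          + HL * Real.sqrt (T n * ∫ t in (Icc (-δ) δ)ᶜ, (K (Δ n) t) ^ 2)
          + |H τ| * |Real.sqrt (T n) * ∫ t in (Icc (-δ) δ)ᶜ, K (Δ n) t|)
        + |H τ| * |Real.sqrt (T n) * (1 - (1/c) * ∫ t : ℝ, K (Δ n) t)| := by
    intro n hΔn hTn τ
    set k : ℝ → ℝ := K (Δ n) with hk
    set s : ℝ := Real.sqrt (T n) with hs
    have hs0 : 0 ≤ s := Real.sqrt_nonneg _
    have hk1 : Integrable k := hK1 _ hΔn
    have hk2 : MemLp k 2 := hK2 _ hΔn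
    have hint : Integrable (fun t => k t * H (τ - t)) := hint1 _ hΔn τ
    have hintD : Integrable (fun t => k t * (H (τ - t) - H τ)) := by
      have := hint.sub (hk1.mul_const (H τ))
      refine this.congr (Eventually.of_forall fun t => ?_)
      simp [mul_sub]
    have hS : MeasurableSet (Icc (-δ:ℝ) δ) := measurableSet_Icc
    have hchg : (∫ x : ℝ, k (τ - x) * H x) = ∫ t : ℝ, k t * H (τ - t) := by
      rw [← integral_sub_left_eq_self (fun t => k t * H (τ - t)) volume τ]
      simp
    set A : ℝ := ∫ t in Icc (-δ:ℝ) δ, |k t| * |t| ^ α with hA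
    set IS : ℝ := ∫ t in Icc (-δ:ℝ) δ, k t * (H (τ - t) - H τ) with hISdef
    set J₁ : ℝ := ∫ t in (Icc (-δ:ℝ) δ)ᶜ, k t * H (τ - t) with hJ₁def
    set J₂ : ℝ := ∫ t in (Icc (-δ:ℝ) δ)ᶜ, k t with hJ₂def
    have hdecomp : biasV c k H τ
        = (1/c) * IS + (1/c) * J₁ - (1/c) * (J₂ * H τ)
          - (1 - (1/c) * ∫ t : ℝ, k t) * H τ := by
      have h1 : (∫ t : ℝ, k t * (H (τ - t) - H τ))
          = (∫ t : ℝ, k t * H (τ - t)) - (∫ t : ℝ, k t) * H τ := by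
        simp_rw [mul_sub]
        rw [integral_sub hint (hk1.mul_const (H τ)), integral_mul_const]
      have h2 : (∫ t : ℝ, k t * (H (τ - t) - H τ))
          = IS + ∫ t in (Icc (-δ:ℝ) δ)ᶜ, k t * (H (τ - t) - H τ) :=
        (integral_add_compl hS hintD).symm
      have h3 : (∫ t in (Icc (-δ:ℝ) δ)ᶜ, k t * (H (τ - t) - H τ)) = J₁ - J₂ * H τ := by
        simp_rw [mul_sub]
        rw [integral_sub hint.integrableOn (hk1.mul_const (H τ)).integrableOn,
          integral_mul_const]
      have h4 : (∫ t : ℝ, k t * H (τ - t))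
          = IS + (J₁ - J₂ * H τ) + (∫ t : ℝ, k t) * H τ := by
        linarith [h1, h2, h3]
      rw [biasV, hchg, h4]
      ring
    have hISbound : |IS| ≤ M₀ * A := by
      have h1 : |IS| ≤ ∫ t in Icc (-δ:ℝ) δ, |k t| * |H (τ - t) - H τ| := by
        simpa [Real.norm_eq_abs, abs_mul] using norm_integral_le_integral_norm
          (μ := volume.restrict (Icc (-δ:ℝ) δ)) (fun t => k t * (H (τ - t) - H τ))
      have h2 : (∫ t in Icc (-δ:ℝ) δ, |k t| * |H (τ - t) - H τ|)
          ≤ ∫ t in Icc (-δ:ℝ) δ, M₀ * (|k t| * |t| ^ α) := by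
        refine setIntegral_mono_on
          (by simpa [Real.norm_eq_abs, abs_mul] using
            (hintD.norm.integrableOn :
              IntegrableOn (fun t => ‖k t * (H (τ - t) - H τ)‖) (Icc (-δ:ℝ) δ) volume))
          (((hkα _ hΔn).mono_set (Icc_subset_Icc (neg_le_neg hδle₃) hδle₃)).const_mul M₀)
          hS ?_
        intro t ht
        have htabs : |t| ≤ δ := abs_le.2 ⟨ht.1, ht.2⟩
        have h' : |(τ - t) - τ| = |t| := by rw [sub_sub_cancel_left, abs_neg]
        have hD : |H (τ - t) - H τ| ≤ M₀ * |t| ^ α := by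
          have := hlip (τ - t) τ (by rw [h']; exact htabs.trans hδle₁)
          rwa [h'] at this
        calc |k t| * |H (τ - t) - H τ|
            ≤ |k t| * (M₀ * |t| ^ α) := mul_le_mul_of_nonneg_left hD (abs_nonneg _)
          _ = M₀ * (|k t| * |t| ^ α) := by ring
      have h3 : (∫ t in Icc (-δ:ℝ) δ, M₀ * (|k t| * |t| ^ α)) = M₀ * A := by
        rw [integral_const_mul]
      linarith
    have hJ₁bound : |J₁| ≤ Real.sqrt (∫ t in (Icc (-δ:ℝ) δ)ᶜ, k t ^ 2) * HL := by
      have hconj : Real.HolderConjugate 2 2 := Real.HolderConjugate.two_two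
      have hmemk : MemLp (fun t => |k t|) (ENNReal.ofReal 2)
          (volume.restrict ((Icc (-δ:ℝ) δ)ᶜ)) := by
        rw [ENNReal.ofReal_ofNat]
        simpa [Real.norm_eq_abs] using (hk2.restrict ((Icc (-δ:ℝ) δ)ᶜ)).norm
      have hmemH : MemLp (fun t => |H (τ - t)|) (ENNReal.ofReal 2)
          (volume.restrict ((Icc (-δ:ℝ) δ)ᶜ)) := by
        rw [ENNReal.ofReal_ofNat]
        simpa [Real.norm_eq_abs] using ((hshift τ).restrict ((Icc (-δ:ℝ) δ)ᶜ)).norm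
      have hCS := integral_mul_le_Lp_mul_Lq_of_nonneg hconj
        (Eventually.of_forall fun t => abs_nonneg (k t))
        (Eventually.of_forall fun t => abs_nonneg (H (τ - t))) hmemk hmemH
      simp_rw [habs2] at hCS
      have h1 : |J₁| ≤ ∫ t in (Icc (-δ:ℝ) δ)ᶜ, |k t| * |H (τ - t)| := by
        have := norm_integral_le_integral_norm
          (μ := volume.restrict ((Icc (-δ:ℝ) δ)ᶜ)) (fun t => k t * H (τ - t))
        simpa [Real.norm_eq_abs, abs_mul] using this
      have hsq : Integrable (fun t => H (τ - t) ^ 2) := (hshift τ).integrable_sq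
      have h2 : (∫ t in (Icc (-δ:ℝ) δ)ᶜ, H (τ - t) ^ 2) ≤ ∫ u : ℝ, H u ^ 2 := by
        have hle := setIntegral_le_integral (s := (Icc (-δ:ℝ) δ)ᶜ) hsq (Eventually.of_forall fun x => sq_nonneg _)
        have heq : (∫ t : ℝ, H (τ - t) ^ 2) = ∫ u : ℝ, H u ^ 2 :=
          integral_sub_left_eq_self (fun u => H u ^ 2) volume τ
        linarith
      have hknn : 0 ≤ ∫ t in (Icc (-δ:ℝ) δ)ᶜ, k t ^ 2 :=
        integral_nonneg fun t => sq_nonneg _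
      have hHnn : 0 ≤ ∫ t in (Icc (-δ:ℝ) δ)ᶜ, H (τ - t) ^ 2 :=
        integral_nonneg fun t => sq_nonneg _
      have h3 : ((∫ t in (Icc (-δ:ℝ) δ)ᶜ, H (τ - t) ^ 2)) ^ ((1:ℝ)/2) ≤ HL := by
        rw [hHLdef, Real.sqrt_eq_rpow]
        exact Real.rpow_le_rpow hHnn h2 (by norm_num)
      calc |J₁| ≤ ∫ t in (Icc (-δ:ℝ) δ)ᶜ, |k t| * |H (τ - t)| := h1
        _ ≤ (∫ t in (Icc (-δ:ℝ) δ)ᶜ, k t ^ 2) ^ ((1:ℝ)/2)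
            * (∫ t in (Icc (-δ:ℝ) δ)ᶜ, H (τ - t) ^ 2) ^ ((1:ℝ)/2) := hCS
        _ ≤ (∫ t in (Icc (-δ:ℝ) δ)ᶜ, k t ^ 2) ^ ((1:ℝ)/2) * HL :=
            mul_le_mul_of_nonneg_left h3 (Real.rpow_nonneg hknn _)
        _ = Real.sqrt (∫ t in (Icc (-δ:ℝ) δ)ᶜ, k t ^ 2) * HL := by
            rw [Real.sqrt_eq_rpow]
    have habs4 : ∀ a b c' d : ℝ, |a + b - c' - d| ≤ |a| + |b| + |c'| + |d| := by
      intro a b c' d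
      have h1 : |a + b - c' - d| ≤ |a + b - c'| + |d| := abs_sub _ _
      have h2 : |a + b - c'| ≤ |a + b| + |c'| := abs_sub _ _
      have h3 : |a + b| ≤ |a| + |b| := abs_add_le _ _
      linarith
    have hfinal : |biasV c k H τ| ≤ (1/c) * (M₀ * A)
        + (1/c) * (Real.sqrt (∫ t in (Icc (-δ:ℝ) δ)ᶜ, k t ^ 2) * HL)
        + (1/c) * (|J₂| * |H τ|)
        + |1 - (1/c) * ∫ t : ℝ, k t| * |H τ| := by
      rw [hdecomp]
      have h0 := habs4 ((1/c) * IS) ((1/c) * J₁) ((1/c) * (J₂ * H τ))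
        ((1 - (1/c) * ∫ t : ℝ, k t) * H τ)
      have e1 : |(1/c) * IS| ≤ (1/c) * (M₀ * A) := by
        rw [abs_mul, abs_of_nonneg h1c]
        exact mul_le_mul_of_nonneg_left hISbound h1c
      have e2 : |(1/c) * J₁| ≤ (1/c) * (Real.sqrt (∫ t in (Icc (-δ:ℝ) δ)ᶜ, k t ^ 2) * HL) := by
        rw [abs_mul, abs_of_nonneg h1c]
        exact mul_le_mul_of_nonneg_left hJ₁bound h1c
      have e3 : |(1/c) * (J₂ * H τ)| = (1/c) * (|J₂| * |H τ|) := by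
        rw [abs_mul, abs_mul, abs_of_nonneg h1c]
      have e4 : |(1 - (1/c) * ∫ t : ℝ, k t) * H τ|
          = |1 - (1/c) * ∫ t : ℝ, k t| * |H τ| := abs_mul _ _
      linarith
    have hgoal := mul_le_mul_of_nonneg_left hfinal hs0
    have hsqrtmul : Real.sqrt (T n * ∫ t in (Icc (-δ:ℝ) δ)ᶜ, k t ^ 2)
        = s * Real.sqrt (∫ t in (Icc (-δ:ℝ) δ)ᶜ, k t ^ 2) := Real.sqrt_mul hTn _
    have habs_s : ∀ x : ℝ, |s * x| = s * |x| := fun x => by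
      rw [abs_mul, abs_of_nonneg hs0]
    calc s * |biasV c k H τ|
        ≤ s * ((1/c) * (M₀ * A)
          + (1/c) * (Real.sqrt (∫ t in (Icc (-δ:ℝ) δ)ᶜ, k t ^ 2) * HL)
          + (1/c) * (|J₂| * |H τ|)
          + |1 - (1/c) * ∫ t : ℝ, k t| * |H τ|) := hgoal
      _ = (1/c) * (M₀ * (s * A)
          + HL * (s * Real.sqrt (∫ t in (Icc (-δ:ℝ) δ)ᶜ, k t ^ 2))
          + |H τ| * (s * |J₂|))
          + |H τ| * (s * |1 - (1/c) * ∫ t : ℝ, k t|) := by ring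
      _ = (1/c) * (M₀ * (s * A)
          + HL * Real.sqrt (T n * ∫ t in (Icc (-δ:ℝ) δ)ᶜ, k t ^ 2)
          + |H τ| * |s * J₂|)
          + |H τ| * |s * (1 - (1/c) * ∫ t : ℝ, k t)| := by
          rw [hsqrtmul, habs_s, habs_s]
  -- the four error sequences tend to zero
  have hevent : ∀ᶠ n in atTop, 0 < Δ n ∧ 0 ≤ T n :=
    (hΔ.eventually_gt_atTop 0).and (hT.eventually_ge_atTop 0)
  have he₀ : Tendsto (fun n => |Real.sqrt (T n) * (1 - (1/c) * ∫ t : ℝ, K (Δ n) t)|)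
      atTop (nhds 0) := by simpa using hbal0.abs
  have he₁ : Tendsto (fun n => Real.sqrt (T n) * ∫ t in Icc (-δ) δ, |K (Δ n) t| * |t| ^ α)
      atTop (nhds 0) := by
    refine squeeze_zero' ?_ ?_ hb3
    · filter_upwards [hevent] with n hn
      exact mul_nonneg (Real.sqrt_nonneg _) (setIntegral_nonneg measurableSet_Icc
        fun t _ => mul_nonneg (abs_nonneg _) (Real.rpow_nonneg (abs_nonneg _) _))
    · filter_upwards [hevent] with n hn
      refine mul_le_mul_of_nonneg_left ?_ (Real.sqrt_nonneg _)
      refine setIntegral_mono_set (hkα _ hn.1) ?_ ?_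
      · exact Eventually.of_forall fun t =>
          mul_nonneg (abs_nonneg _) (Real.rpow_nonneg (abs_nonneg _) _)
      · exact HasSubset.Subset.eventuallyLE (Icc_subset_Icc (neg_le_neg hδle₃) hδle₃)
  have he₂ : Tendsto (fun n => Real.sqrt (T n * ∫ t in (Icc (-δ) δ)ᶜ, (K (Δ n) t) ^ 2))
      atTop (nhds 0) := by
    have h0 : Tendsto (fun n => T n * ∫ t in (Icc (-δ) δ)ᶜ, (K (Δ n) t) ^ 2)
        atTop (nhds 0) := by
      have h1 : Tendsto (fun n => 2 * (T n * ∫ t in Ioi δ, (K (Δ n) t) ^ 2))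
          atTop (nhds 0) := by
        simpa using (hbal2 δ hδpos).const_mul 2
      refine h1.congr' ?_
      filter_upwards [hevent] with n hn
      rw [heven (fun t => (K (Δ n) t) ^ 2) (fun t => by simp [hKeven _ hn.1])
        (hK2 _ hn.1).integrable_sq]
      ring
    simpa using h0.sqrt
  have he₃ : Tendsto (fun n => |Real.sqrt (T n) * ∫ t in (Icc (-δ) δ)ᶜ, K (Δ n) t|)
      atTop (nhds 0) := by
    have h1 : Tendsto (fun n => Real.sqrt (T n) * ∫ t in (Icc (-δ) δ)ᶜ, K (Δ n) t)
        atTop (nhds 0) := by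
      have h2 : Tendsto (fun n => 2 * (Real.sqrt (T n) * ∫ t in Ioi δ, K (Δ n) t))
          atTop (nhds 0) := by
        simpa using (hbal1 δ hδpos).const_mul 2
      refine h2.congr' ?_
      filter_upwards [hevent] with n hn
      rw [heven (K (Δ n)) (hKeven _ hn.1) (hK1 _ hn.1)]
      ring
    simpa using h1.abs
  have hcomb : ∀ C : ℝ, Tendsto (fun n =>
      (1/c) * (M₀ * (Real.sqrt (T n) * ∫ t in Icc (-δ) δ, |K (Δ n) t| * |t| ^ α)
        + HL * Real.sqrt (T n * ∫ t in (Icc (-δ) δ)ᶜ, (K (Δ n) t) ^ 2)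
        + C * |Real.sqrt (T n) * ∫ t in (Icc (-δ) δ)ᶜ, K (Δ n) t|)
      + C * |Real.sqrt (T n) * (1 - (1/c) * ∫ t : ℝ, K (Δ n) t)|) atTop (nhds 0) := by
    intro C
    have := ((((he₁.const_mul M₀).add (he₂.const_mul HL)).add
      (he₃.const_mul C)).const_mul (1/c)).add (he₀.const_mul C)
    simpa using this
  constructor
  · intro τ
    refine squeeze_zero_norm' ?_ (hcomb |H τ|)
    filter_upwards [hevent] with n hn
    have h := key n hn.1 hn.2 τ
    rw [Real.norm_eq_abs, abs_mul, abs_of_nonneg (Real.sqrt_nonneg _)]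
    exact h
  · intro a b ε hε
    obtain ⟨C, hC⟩ := (isCompact_Icc (a := a) (b := b)).exists_bound_of_continuousOn
      hHcont.continuousOn
    have hCn : ∀ τ ∈ Icc a b, |H τ| ≤ C := fun τ hτ => by
      simpa [Real.norm_eq_abs] using hC τ hτ
    filter_upwards [hevent, (hcomb C).eventually_lt_const hε] with n hn hGn
    intro τ hτ
    have h1 := key n hn.1 hn.2 τ
    refine lt_of_le_of_lt (h1.trans ?_) hGn
    have hτC := hCn τ hτ
    gcongr
end
end
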